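/- arXiv:2101.04254 — 9 statements merged into one kernel-verified Lean document; each statement's English description precedes it below -/
import Mathlib

section
/- Let (X₁,ρ₁,μ₁) and (X₂,ρ₂,μ₂) be quasimetric spaces with upper doubling measures with dominating functions λ₁, λ₂, let α₁, α₂ > 0, C_K ≥ 1, C_H ≥ 0, and let K : (X₁×X₂)×(X₁×X₂) → ℂ be a measurable kernel satisfying the bi-parameter Hölder estimate with constant C_H in base-point form. Let φᵢ, θᵢ ∈ L²(μᵢ) (i = 1,2) with supports E_{φᵢ} := supp φᵢ and E_{θᵢ} := supp θᵢ satisfying: E_{φ₁} ∩ E_{θ₁} = ∅ and E_{φ₂} ∩ E_{θ₂} = ∅; for all x₁ ∈ E_{θ₁} and all y₁, z ∈ E_{φ₁} one has ρ₁(y₁,z) ≤ ρ₁(x₁,z)/C_K, and for all x₂ ∈ E_{θ₂} and all y₂, w ∈ E_{φ₂} one has ρ₂(y₂,w) ≤ ρ₂(x₂,w)/C_K; ∫ φ₁ dμ₁ = 0 and ∫ φ₂ dμ₂ = 0; and the functions (x,y) ↦ K(x,y)φ₁(y₁)φ₂(y₂)θ₁(x₁)θ₂(x₂), together with the corresponding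 expressions in which y₁ is replaced by a fixed z ∈ E_{φ₁} and/or y₂ by a fixed w ∈ E_{φ₂}, are absolutely integrable. Then for every z ∈ E_{φ₁} and every w ∈ E_{φ₂}, setting d₁ := sup_{y₁ ∈ E_{φ₁}} ρ₁(y₁,z) and d₂ := sup_{y₂ ∈ E_{φ₂}} ρ₂(y₂,w), one has |∬ K(x,y) φ₁(y₁)φ₂(y₂)θ₁(x₁)θ₂(x₂) d(μ₁×μ₂)(x) d(μ₁×μ₂)(y)| ≤ C_H · d₁^{α₁} d₂^{α₂} · ‖φ₁‖_{L²(μ₁)}‖φ₂‖_{L²(μ₂)} μ₁(E_{φ₁})^{1/2} μ₂(E_{φ₂})^{1/2} · ∫_{E_{θ₁}} ρ₁(x₁,z)^{−α₁} λ₁(z,ρ₁(x₁,z))^{−1} |θ₁(x₁)| dμ₁(x₁) · ∫_{E_{θ₂}} ρ₂(x₂,w)^{−α₂} λ₂(w,ρ₂(x₂,w))^{−1} |θ₂(x₂)| dμ₂(x₂). -/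
/-!
Since `φ₁` and `φ₂` have mean zero, the integral does not change when the kernel with `y₁`
frozen at `z`, with `y₂` frozen at `w`, and with both frozen is subtracted from `K x y`
(each of these terms factors through `∫ φ₁` or `∫ φ₂`). What remains is the double difference
of `K` at the base point `(z, w)`, which the bi-parameter Hölder estimate bounds pointwise by
`C_H d₁^α₁ d₂^α₂ |φ₁(y₁)| |φ₂(y₂)|` times the two one-variable weights in `x₁` and `x₂`. This
bound is a product of functions of the four variables separately, and Cauchy–Schwarz on the
supports gives `∫ |φᵢ| ≤ ‖φᵢ‖₂ μᵢ(supp φᵢ)^{1/2}`.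
-/

open MeasureTheory Set Function
open scoped ENNReal

section ProductMeasure

variable {α β γ : Type*} [MeasurableSpace α] [MeasurableSpace β] [MeasurableSpace γ]

theorem sigmaFinite_of_measure_ball_lt_top {μ : Measure α} (ρ : α → α → ℝ)
    (h : ∀ x r, 0 < r → μ {y | ρ x y < r} < ∞) : SigmaFinite μ := by
  rcases isEmpty_or_nonempty α with hα | ⟨⟨x₀⟩⟩
  · infer_instance
  refine Measure.sigmaFinite_of_countable (S := range fun n : ℕ => {y | ρ x₀ y < (n : ℝ) + 1})
    (countable_range _) ?_ ?_
  · rintro _ ⟨n, rfl⟩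
    exact h x₀ _ (by positivity)
  · refine eq_univ_of_forall fun y => mem_sUnion.2 ⟨_, ⟨⌈ρ x₀ y⌉₊, rfl⟩, ?_⟩
    exact (Nat.le_ceil (ρ x₀ y)).trans_lt (lt_add_one _)

variable {μ : Measure α} {ν : Measure β}

/-- `f` and `g` need not be measurable (the weights in the main estimate involve the dominating
function, which is not assumed measurable); pointwise finiteness is what still lets constants
be pulled out of the lower integrals. -/
theorem lintegral_prod_mul_le [SFinite μ] [SFinite ν] {f : α → ℝ≥0∞} {g : β → ℝ≥0∞}
    (hf : ∀ a, f a ≠ ∞) (hg : ∀ b, g b ≠ ∞) :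
    ∫⁻ p, f p.1 * g p.2 ∂(μ.prod ν) ≤ (∫⁻ a, f a ∂μ) * ∫⁻ b, g b ∂ν := by
  obtain ⟨h, hm, hle, heq⟩ := exists_measurable_le_lintegral_eq (μ.prod ν) fun p => f p.1 * g p.2
  rw [heq]
  rcases ne_or_eq (∫⁻ b, g b ∂ν) ∞ with hG | hG
  · rw [lintegral_prod _ hm.aemeasurable, ← lintegral_mul_const' _ _ hG]
    refine lintegral_mono fun a => ?_
    rw [← lintegral_const_mul' _ _ (hf a)]
    exact lintegral_mono fun b => hle (a, b)
  rcases eq_or_ne (∫⁻ a, f a ∂μ) 0 with hF | hF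
  · rw [lintegral_prod_symm _ hm.aemeasurable, hF, zero_mul]
    calc ∫⁻ b, ∫⁻ a, h (a, b) ∂μ ∂ν ≤ ∫⁻ b, (∫⁻ a, f a ∂μ) * g b ∂ν :=
          lintegral_mono fun b => (lintegral_mono fun a => hle (a, b)).trans_eq
            (lintegral_mul_const' _ _ (hg b))
      _ = 0 := by simp [hF]
  · rw [hG, ENNReal.mul_top hF]
    exact le_top

theorem lintegral_enorm_le_eLpNorm_two_mul_measure_support {E : Type*} [NormedAddCommGroup E]
    {f : α → E} (hf : AEStronglyMeasurable f μ) :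
    ∫⁻ a, ‖f a‖ₑ ∂μ ≤ eLpNorm f 2 μ * μ (support f) ^ ((1 : ℝ) / 2) := by
  have h := eLpNorm_le_eLpNorm_mul_rpow_measure_univ (p := 1) (q := 2)
    (μ := μ.restrict (support f)) one_le_two hf.restrict
  rw [eLpNorm_restrict_eq_of_support_subset subset_rfl,
    eLpNorm_restrict_eq_of_support_subset subset_rfl, eLpNorm_one_eq_lintegral_enorm,
    Measure.restrict_apply_univ] at h
  convert h using 3
  norm_num

theorem integral_eq_integral_sub_sub_add {E : Type*} [NormedAddCommGroup E] [NormedSpace ℝ E]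
    {f₁ f₂ f₃ f₄ : α → E} (h₁ : Integrable f₁ μ) (h₂ : Integrable f₂ μ) (h₃ : Integrable f₃ μ)
    (h₄ : Integrable f₄ μ) (h₂0 : ∫ a, f₂ a ∂μ = 0) (h₃0 : ∫ a, f₃ a ∂μ = 0)
    (h₄0 : ∫ a, f₄ a ∂μ = 0) :
    ∫ a, f₁ a ∂μ = ∫ a, f₁ a - f₂ a - f₃ a + f₄ a ∂μ := by
  rw [integral_add ?_ h₄, integral_sub ?_ h₃, integral_sub h₁ h₂, h₂0, h₃0, h₄0]
  · simp
  · exact h₁.sub h₂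
  · exact (h₁.sub h₂).sub h₃

variable (μ ν) (τ : Measure γ) [SFinite μ] [SFinite ν] [SFinite τ]

theorem integral_prod_prod_mul_fst (f : α → ℂ) (g : β × γ → ℂ) :
    ∫ q, f q.1.1 * g (q.1.2, q.2) ∂((μ.prod ν).prod τ) = (∫ a, f a ∂μ) * ∫ p, g p ∂(ν.prod τ) := by
  rw [← integral_prod_mul, ← (measurePreserving_prodAssoc μ ν τ).integral_comp']
  rfl

theorem integral_prod_prod_mul_snd (f : β → ℂ) (g : α × γ → ℂ) :
    ∫ q, f q.1.2 * g (q.1.1, q.2) ∂((μ.prod ν).prod τ) = (∫ b, f b ∂ν) * ∫ p, g p ∂(μ.prod τ) := by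
  have hswap : MeasurePreserving (MeasurableEquiv.prodCongr MeasurableEquiv.prodComm
      (MeasurableEquiv.refl γ)) ((ν.prod μ).prod τ) ((μ.prod ν).prod τ) :=
    (Measure.measurePreserving_swap (μ := ν) (ν := μ)).prod (MeasurePreserving.id τ)
  rw [← integral_prod_prod_mul_fst, ← hswap.integral_comp']
  rfl

end ProductMeasure

theorem rpow_neg_mul_inv_nonneg {r L α : ℝ} (hr : 0 ≤ r) (hL : 0 < r → 0 < L) (hα : α ≠ 0) :
    0 ≤ r ^ (-α) * L⁻¹ := by
  rcases hr.eq_or_lt with rfl | hr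
  · simp [Real.zero_rpow (neg_ne_zero.2 hα)]
  · exact mul_nonneg (Real.rpow_nonneg hr.le _) (inv_nonneg.2 (hL hr).le)

theorem div_rpow_mul_eq {s r L α : ℝ} (hr : 0 ≤ r) :
    s ^ α / (r ^ α * L) = s ^ α * (r ^ (-α) * L⁻¹) := by
  rw [Real.rpow_neg hr, div_eq_mul_inv, mul_inv]

theorem enorm_mul_le_ofReal_mul {𝕜 : Type*} [NormedDivisionRing 𝕜] {D a b c e : 𝕜} {C A B : ℝ}
    (hC : 0 ≤ C) (hA : 0 ≤ A) (hD : ‖D‖ ≤ C * A * B) :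
    ‖D * (a * b * c * e)‖ₑ ≤ ENNReal.ofReal C * (‖a‖ₑ * ‖b‖ₑ)
      * (ENNReal.ofReal (A * ‖c‖) * ENNReal.ofReal (B * ‖e‖)) := by
  have key : ‖D * (a * b * c * e)‖ ≤ C * (‖a‖ * ‖b‖) * ((A * ‖c‖) * (B * ‖e‖)) := by
    simp only [norm_mul]
    calc ‖D‖ * (‖a‖ * ‖b‖ * ‖c‖ * ‖e‖) ≤ C * A * B * (‖a‖ * ‖b‖ * ‖c‖ * ‖e‖) := by gcongr
      _ = _ := by ring
  simp only [← ofReal_norm]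
  rw [← ENNReal.ofReal_mul (by positivity), ← ENNReal.ofReal_mul hC,
    ← ENNReal.ofReal_mul (by positivity), ← ENNReal.ofReal_mul (by positivity)]
  exact ENNReal.ofReal_le_ofReal key

section Kernel

variable {X₁ X₂ : Type*}

def doubleDiff (K : X₁ × X₂ → X₁ × X₂ → ℂ) (z : X₁) (w : X₂) (x y : X₁ × X₂) : ℂ :=
  K x y - K x (y.1, w) - K x (z, y.2) + K x (z, w)

theorem enorm_doubleDiff_mul_le {ρ₁ : X₁ → X₁ → ℝ} {ρ₂ : X₂ → X₂ → ℝ}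
    {lam₁ : X₁ → ℝ → ℝ} {lam₂ : X₂ → ℝ → ℝ} {α₁ α₂ C_K C_H d₁ d₂ : ℝ}
    {K : X₁ × X₂ → X₁ × X₂ → ℂ} {φ₁ θ₁ : X₁ → ℂ} {φ₂ θ₂ : X₂ → ℂ} {z : X₁} {w : X₂}
    (hρ₁ : ∀ x y, 0 ≤ ρ₁ x y) (hρ₂ : ∀ x y, 0 ≤ ρ₂ x y)
    (hlam₁ : ∀ x r, 0 < r → 0 < lam₁ x r) (hlam₂ : ∀ x r, 0 < r → 0 < lam₂ x r)
    (hα₁ : 0 < α₁) (hα₂ : 0 < α₂) (hC_H : 0 ≤ C_H)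
    (hK : ∀ x₁ x₂ y₁ y₂ z w,
        ρ₁ y₁ z ≤ ρ₁ x₁ z / C_K → ρ₂ y₂ w ≤ ρ₂ x₂ w / C_K →
        ‖K (x₁, x₂) (y₁, y₂) - K (x₁, x₂) (y₁, w) - K (x₁, x₂) (z, y₂) + K (x₁, x₂) (z, w)‖
          ≤ C_H * (ρ₁ y₁ z ^ α₁ / (ρ₁ x₁ z ^ α₁ * lam₁ z (ρ₁ x₁ z)))
              * (ρ₂ y₂ w ^ α₂ / (ρ₂ x₂ w ^ α₂ * lam₂ w (ρ₂ x₂ w))))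
    (hsep₁ : ∀ x₁ ∈ support θ₁, ∀ y₁ ∈ support φ₁, ∀ z ∈ support φ₁, ρ₁ y₁ z ≤ ρ₁ x₁ z / C_K)
    (hsep₂ : ∀ x₂ ∈ support θ₂, ∀ y₂ ∈ support φ₂, ∀ w ∈ support φ₂, ρ₂ y₂ w ≤ ρ₂ x₂ w / C_K)
    (hz : z ∈ support φ₁) (hw : w ∈ support φ₂)
    (hd₁ : d₁ ∈ upperBounds ((fun y₁ => ρ₁ y₁ z) '' support φ₁))
    (hd₂ : d₂ ∈ upperBounds ((fun y₂ => ρ₂ y₂ w) '' support φ₂)) (x y : X₁ × X₂) :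
    ‖doubleDiff K z w x y * (φ₁ y.1 * φ₂ y.2 * θ₁ x.1 * θ₂ x.2)‖ₑ
      ≤ ENNReal.ofReal (C_H * d₁ ^ α₁ * d₂ ^ α₂) * (‖φ₁ y.1‖ₑ * ‖φ₂ y.2‖ₑ)
        * (ENNReal.ofReal (ρ₁ x.1 z ^ (-α₁) * (lam₁ z (ρ₁ x.1 z))⁻¹ * ‖θ₁ x.1‖)
          * ENNReal.ofReal (ρ₂ x.2 w ^ (-α₂) * (lam₂ w (ρ₂ x.2 w))⁻¹ * ‖θ₂ x.2‖)) := by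
  obtain ⟨x₁, x₂⟩ := x
  obtain ⟨y₁, y₂⟩ := y
  by_cases hzero : φ₁ y₁ = 0 ∨ φ₂ y₂ = 0 ∨ θ₁ x₁ = 0 ∨ θ₂ x₂ = 0
  · rcases hzero with h | h | h | h <;> simp [h]
  obtain ⟨hy₁, hy₂, hx₁, hx₂⟩ : φ₁ y₁ ≠ 0 ∧ φ₂ y₂ ≠ 0 ∧ θ₁ x₁ ≠ 0 ∧ θ₂ x₂ ≠ 0 := by
    simpa only [not_or] using hzero
  have hd₁y := Real.rpow_le_rpow (hρ₁ y₁ z) (hd₁ (mem_image_of_mem _ hy₁)) hα₁.le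
  have hd₂y := Real.rpow_le_rpow (hρ₂ y₂ w) (hd₂ (mem_image_of_mem _ hy₂)) hα₂.le
  have hd₁0 : 0 ≤ d₁ := (hρ₁ z z).trans (hd₁ (mem_image_of_mem _ hz))
  have hd₂0 : 0 ≤ d₂ := (hρ₂ w w).trans (hd₂ (mem_image_of_mem _ hw))
  have hW₁ := rpow_neg_mul_inv_nonneg (hρ₁ x₁ z) (hlam₁ z _) hα₁.ne'
  have hW₂ := rpow_neg_mul_inv_nonneg (hρ₂ x₂ w) (hlam₂ w _) hα₂.ne'
  have hD := hK x₁ x₂ y₁ y₂ z w (hsep₁ x₁ hx₁ y₁ hy₁ z hz) (hsep₂ x₂ hx₂ y₂ hy₂ w hw)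
  rw [div_rpow_mul_eq (hρ₁ x₁ z), div_rpow_mul_eq (hρ₂ x₂ w)] at hD
  refine enorm_mul_le_ofReal_mul (by positivity) hW₁ (hD.trans ?_)
  calc C_H * (ρ₁ y₁ z ^ α₁ * (ρ₁ x₁ z ^ (-α₁) * (lam₁ z (ρ₁ x₁ z))⁻¹))
        * (ρ₂ y₂ w ^ α₂ * (ρ₂ x₂ w ^ (-α₂) * (lam₂ w (ρ₂ x₂ w))⁻¹))
      ≤ C_H * (d₁ ^ α₁ * (ρ₁ x₁ z ^ (-α₁) * (lam₁ z (ρ₁ x₁ z))⁻¹))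
        * (d₂ ^ α₂ * (ρ₂ x₂ w ^ (-α₂) * (lam₂ w (ρ₂ x₂ w))⁻¹)) := by
        gcongr
        exact mul_nonneg (Real.rpow_nonneg (hρ₂ y₂ w) _) hW₂
    _ = _ := by ring

variable [MeasurableSpace X₁] [MeasurableSpace X₂] {μ₁ : Measure X₁} {μ₂ : Measure X₂}
  [SFinite μ₁] [SFinite μ₂]

theorem integral_eq_integral_doubleDiff_mul {K : X₁ × X₂ → X₁ × X₂ → ℂ} {φ₁ θ₁ : X₁ → ℂ}
    {φ₂ θ₂ : X₂ → ℂ} (hφ₁ : ∫ y, φ₁ y ∂μ₁ = 0) (hφ₂ : ∫ y, φ₂ y ∂μ₂ = 0) {z : X₁} {w : X₂}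
    (hK : Integrable (fun q : (X₁ × X₂) × (X₁ × X₂) =>
      K q.2 q.1 * φ₁ q.1.1 * φ₂ q.1.2 * θ₁ q.2.1 * θ₂ q.2.2) ((μ₁.prod μ₂).prod (μ₁.prod μ₂)))
    (hKz : Integrable (fun q : (X₁ × X₂) × (X₁ × X₂) =>
      K q.2 (z, q.1.2) * φ₁ q.1.1 * φ₂ q.1.2 * θ₁ q.2.1 * θ₂ q.2.2)
        ((μ₁.prod μ₂).prod (μ₁.prod μ₂)))
    (hKw : Integrable (fun q : (X₁ × X₂) × (X₁ × X₂) =>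
      K q.2 (q.1.1, w) * φ₁ q.1.1 * φ₂ q.1.2 * θ₁ q.2.1 * θ₂ q.2.2)
        ((μ₁.prod μ₂).prod (μ₁.prod μ₂)))
    (hKzw : Integrable (fun q : (X₁ × X₂) × (X₁ × X₂) =>
      K q.2 (z, w) * φ₁ q.1.1 * φ₂ q.1.2 * θ₁ q.2.1 * θ₂ q.2.2)
        ((μ₁.prod μ₂).prod (μ₁.prod μ₂))) :
    ∫ q, K q.2 q.1 * φ₁ q.1.1 * φ₂ q.1.2 * θ₁ q.2.1 * θ₂ q.2.2 ∂((μ₁.prod μ₂).prod (μ₁.prod μ₂))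
      = ∫ q, doubleDiff K z w q.2 q.1 * (φ₁ q.1.1 * φ₂ q.1.2 * θ₁ q.2.1 * θ₂ q.2.2)
          ∂((μ₁.prod μ₂).prod (μ₁.prod μ₂)) := by
  have hKz0 : ∫ q, K q.2 (z, q.1.2) * φ₁ q.1.1 * φ₂ q.1.2 * θ₁ q.2.1 * θ₂ q.2.2
      ∂((μ₁.prod μ₂).prod (μ₁.prod μ₂)) = 0 := by
    refine (integral_congr_ae (ae_of_all _ fun q => ?_)).trans
      ((integral_prod_prod_mul_fst μ₁ μ₂ _ φ₁
        fun p => K p.2 (z, p.1) * φ₂ p.1 * θ₁ p.2.1 * θ₂ p.2.2).trans ?_)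
    · dsimp only
      ring
    · rw [hφ₁, zero_mul]
  have hKw0 : ∫ q, K q.2 (q.1.1, w) * φ₁ q.1.1 * φ₂ q.1.2 * θ₁ q.2.1 * θ₂ q.2.2
      ∂((μ₁.prod μ₂).prod (μ₁.prod μ₂)) = 0 := by
    refine (integral_congr_ae (ae_of_all _ fun q => ?_)).trans
      ((integral_prod_prod_mul_snd μ₁ μ₂ _ φ₂
        fun p => K p.2 (p.1, w) * φ₁ p.1 * θ₁ p.2.1 * θ₂ p.2.2).trans ?_)
    · dsimp only
      ring
    · rw [hφ₂, zero_mul]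
  have hKzw0 : ∫ q, K q.2 (z, w) * φ₁ q.1.1 * φ₂ q.1.2 * θ₁ q.2.1 * θ₂ q.2.2
      ∂((μ₁.prod μ₂).prod (μ₁.prod μ₂)) = 0 := by
    refine (integral_congr_ae (ae_of_all _ fun q => ?_)).trans
      ((integral_prod_prod_mul_fst μ₁ μ₂ _ φ₁
        fun p => K p.2 (z, w) * φ₂ p.1 * θ₁ p.2.1 * θ₂ p.2.2).trans ?_)
    · dsimp only
      ring
    · rw [hφ₁, zero_mul]
  rw [integral_eq_integral_sub_sub_add hK hKw hKz hKzw hKw0 hKz0 hKzw0]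
  congr 1 with q
  simp only [doubleDiff]
  ring

theorem ofReal_norm_integral_le_of_enorm_le {Y₁ Y₂ E E₁ E₂ : Type*} [MeasurableSpace Y₁]
    [MeasurableSpace Y₂] {ν₁ : Measure Y₁} {ν₂ : Measure Y₂} [SFinite ν₁] [SFinite ν₂]
    [NormedAddCommGroup E] [NormedSpace ℝ E] [NormedAddCommGroup E₁] [NormedAddCommGroup E₂]
    {F : (X₁ × X₂) × (Y₁ × Y₂) → E} {φ₁ : X₁ → E₁} {φ₂ : X₂ → E₂}
    (hφ₁ : AEStronglyMeasurable φ₁ μ₁) (hφ₂ : AEStronglyMeasurable φ₂ μ₂)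
    {g₁ : Y₁ → ℝ≥0∞} {g₂ : Y₂ → ℝ≥0∞} (hg₁ : ∀ x, g₁ x ≠ ∞) (hg₂ : ∀ x, g₂ x ≠ ∞)
    {c : ℝ≥0∞} (hc : c ≠ ∞)
    (hF : ∀ q, ‖F q‖ₑ ≤ c * (‖φ₁ q.1.1‖ₑ * ‖φ₂ q.1.2‖ₑ) * (g₁ q.2.1 * g₂ q.2.2)) :
    ENNReal.ofReal ‖∫ q, F q ∂((μ₁.prod μ₂).prod (ν₁.prod ν₂))‖
      ≤ c * eLpNorm φ₁ 2 μ₁ * eLpNorm φ₂ 2 μ₂ * μ₁ (support φ₁) ^ ((1 : ℝ) / 2)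
        * μ₂ (support φ₂) ^ ((1 : ℝ) / 2) * (∫⁻ x, g₁ x ∂ν₁) * ∫⁻ x, g₂ x ∂ν₂ := by
  calc ENNReal.ofReal ‖∫ q, F q ∂((μ₁.prod μ₂).prod (ν₁.prod ν₂))‖
      ≤ ∫⁻ q, ‖F q‖ₑ ∂((μ₁.prod μ₂).prod (ν₁.prod ν₂)) := by
        rw [ofReal_norm]
        exact enorm_integral_le_lintegral_enorm _
    _ ≤ ∫⁻ q, c * ((‖φ₁ q.1.1‖ₑ * ‖φ₂ q.1.2‖ₑ) * (g₁ q.2.1 * g₂ q.2.2))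
          ∂((μ₁.prod μ₂).prod (ν₁.prod ν₂)) :=
        lintegral_mono fun q => (hF q).trans_eq (mul_assoc _ _ _)
    _ = c * ∫⁻ q, (‖φ₁ q.1.1‖ₑ * ‖φ₂ q.1.2‖ₑ) * (g₁ q.2.1 * g₂ q.2.2)
          ∂((μ₁.prod μ₂).prod (ν₁.prod ν₂)) := lintegral_const_mul' _ _ hc
    _ ≤ c * (((∫⁻ y, ‖φ₁ y‖ₑ ∂μ₁) * ∫⁻ y, ‖φ₂ y‖ₑ ∂μ₂) * ((∫⁻ x, g₁ x ∂ν₁) * ∫⁻ x, g₂ x ∂ν₂)) := by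
        gcongr
        refine (lintegral_prod_mul_le (f := fun y : X₁ × X₂ => ‖φ₁ y.1‖ₑ * ‖φ₂ y.2‖ₑ)
          (g := fun x : Y₁ × Y₂ => g₁ x.1 * g₂ x.2) (fun _ => ?_) fun _ => ?_).trans
          (mul_le_mul' (lintegral_prod_mul_le (fun _ => enorm_ne_top) fun _ => enorm_ne_top)
            (lintegral_prod_mul_le hg₁ hg₂))
        · exact ENNReal.mul_ne_top enorm_ne_top enorm_ne_top
        · exact ENNReal.mul_ne_top (hg₁ _) (hg₂ _)
    _ ≤ c * ((eLpNorm φ₁ 2 μ₁ * μ₁ (support φ₁) ^ ((1 : ℝ) / 2))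
          * (eLpNorm φ₂ 2 μ₂ * μ₂ (support φ₂) ^ ((1 : ℝ) / 2))
          * ((∫⁻ x, g₁ x ∂ν₁) * ∫⁻ x, g₂ x ∂ν₂)) := by
        gcongr
        exacts [lintegral_enorm_le_eLpNorm_two_mul_measure_support hφ₁,
          lintegral_enorm_le_eLpNorm_two_mul_measure_support hφ₂]
    _ = _ := by ring

end Kernel

theorem biparameter_kernel_estimate_general
    {X₁ : Type*} {X₂ : Type*} [MeasurableSpace X₁] [MeasurableSpace X₂]
    (ρ₁ : X₁ → X₁ → ℝ)
    (hρ₁_nonneg : ∀ x y, 0 ≤ ρ₁ x y)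
    (ρ₂ : X₂ → X₂ → ℝ)
    (hρ₂_nonneg : ∀ x y, 0 ≤ ρ₂ x y)
    (μ₁ : Measure X₁) (μ₂ : Measure X₂)
    (lam₁ : X₁ → ℝ → ℝ)
    (hlam₁_pos : ∀ x r, 0 < r → 0 < lam₁ x r)
    (hμ₁_lam : ∀ x r, 0 < r → μ₁ {y | ρ₁ x y < r} ≤ ENNReal.ofReal (lam₁ x r))
    (lam₂ : X₂ → ℝ → ℝ)
    (hlam₂_pos : ∀ x r, 0 < r → 0 < lam₂ x r)
    (hμ₂_lam : ∀ x r, 0 < r → μ₂ {y | ρ₂ x y < r} ≤ ENNReal.ofReal (lam₂ x r))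
    (α₁ α₂ : ℝ) (hα₁ : 0 < α₁) (hα₂ : 0 < α₂)
    (C_K : ℝ) (C_H : ℝ) (hC_H : 0 ≤ C_H)
    (K : X₁ × X₂ → X₁ × X₂ → ℂ)
    (hK_Holder : ∀ x₁ x₂ y₁ y₂ z w,
        ρ₁ y₁ z ≤ ρ₁ x₁ z / C_K → ρ₂ y₂ w ≤ ρ₂ x₂ w / C_K →
        ‖K (x₁, x₂) (y₁, y₂) - K (x₁, x₂) (y₁, w) - K (x₁, x₂) (z, y₂) + K (x₁, x₂) (z, w)‖
          ≤ C_H * (ρ₁ y₁ z ^ α₁ / (ρ₁ x₁ z ^ α₁ * lam₁ z (ρ₁ x₁ z)))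
              * (ρ₂ y₂ w ^ α₂ / (ρ₂ x₂ w ^ α₂ * lam₂ w (ρ₂ x₂ w))))
    (φ₁ θ₁ : X₁ → ℂ) (φ₂ θ₂ : X₂ → ℂ)
    (hφ₁ : MemLp φ₁ 2 μ₁) (hφ₂ : MemLp φ₂ 2 μ₂)
    (hsep₁ : ∀ x₁ ∈ Function.support θ₁, ∀ y₁ ∈ Function.support φ₁,
        ∀ z ∈ Function.support φ₁, ρ₁ y₁ z ≤ ρ₁ x₁ z / C_K)
    (hsep₂ : ∀ x₂ ∈ Function.support θ₂, ∀ y₂ ∈ Function.support φ₂,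
        ∀ w ∈ Function.support φ₂, ρ₂ y₂ w ≤ ρ₂ x₂ w / C_K)
    (hcancel₁ : (∫ y, φ₁ y ∂μ₁) = 0)
    (hcancel₂ : (∫ y, φ₂ y ∂μ₂) = 0) :
    ∀ z ∈ Function.support φ₁, ∀ w ∈ Function.support φ₂,
    ∀ d₁ d₂ : ℝ,
      IsLUB ((fun y₁ => ρ₁ y₁ z) '' Function.support φ₁) d₁ →
      IsLUB ((fun y₂ => ρ₂ y₂ w) '' Function.support φ₂) d₂ →
      Integrable (fun q : (X₁ × X₂) × (X₁ × X₂) =>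
          K q.2 q.1 * φ₁ q.1.1 * φ₂ q.1.2 * θ₁ q.2.1 * θ₂ q.2.2)
        ((μ₁.prod μ₂).prod (μ₁.prod μ₂)) →
      Integrable (fun q : (X₁ × X₂) × (X₁ × X₂) =>
          K q.2 (z, q.1.2) * φ₁ q.1.1 * φ₂ q.1.2 * θ₁ q.2.1 * θ₂ q.2.2)
        ((μ₁.prod μ₂).prod (μ₁.prod μ₂)) →
      Integrable (fun q : (X₁ × X₂) × (X₁ × X₂) =>
          K q.2 (q.1.1, w) * φ₁ q.1.1 * φ₂ q.1.2 * θ₁ q.2.1 * θ₂ q.2.2)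
        ((μ₁.prod μ₂).prod (μ₁.prod μ₂)) →
      Integrable (fun q : (X₁ × X₂) × (X₁ × X₂) =>
          K q.2 (z, w) * φ₁ q.1.1 * φ₂ q.1.2 * θ₁ q.2.1 * θ₂ q.2.2)
        ((μ₁.prod μ₂).prod (μ₁.prod μ₂)) →
      ENNReal.ofReal ‖∫ y : X₁ × X₂, (∫ x : X₁ × X₂,
            K x y * φ₁ y.1 * φ₂ y.2 * θ₁ x.1 * θ₂ x.2 ∂(μ₁.prod μ₂)) ∂(μ₁.prod μ₂)‖
        ≤ ENNReal.ofReal (C_H * d₁ ^ α₁ * d₂ ^ α₂)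
            * eLpNorm φ₁ 2 μ₁ * eLpNorm φ₂ 2 μ₂
            * μ₁ (Function.support φ₁) ^ ((1 : ℝ) / 2)
            * μ₂ (Function.support φ₂) ^ ((1 : ℝ) / 2)
            * (∫⁻ x₁ in Function.support θ₁,
                ENNReal.ofReal (ρ₁ x₁ z ^ (-α₁) * (lam₁ z (ρ₁ x₁ z))⁻¹ * ‖θ₁ x₁‖) ∂μ₁)
            * (∫⁻ x₂ in Function.support θ₂,
                ENNReal.ofReal (ρ₂ x₂ w ^ (-α₂) * (lam₂ w (ρ₂ x₂ w))⁻¹ * ‖θ₂ x₂‖) ∂μ₂) := by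
  intro z hz w hw d₁ d₂ hd₁ hd₂ hInt hIntz hIntw hIntzw
  have := sigmaFinite_of_measure_ball_lt_top ρ₁ fun x r hr =>
    (hμ₁_lam x r hr).trans_lt ENNReal.ofReal_lt_top
  have := sigmaFinite_of_measure_ball_lt_top ρ₂ fun x r hr =>
    (hμ₂_lam x r hr).trans_lt ENNReal.ofReal_lt_top
  rw [← integral_prod _ hInt,
    integral_eq_integral_doubleDiff_mul hcancel₁ hcancel₂ hInt hIntz hIntw hIntzw,
    setLIntegral_eq_of_support_subset (support_subset_iff'.2 fun x hx => by
      simp [notMem_support.1 hx]),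
    setLIntegral_eq_of_support_subset (support_subset_iff'.2 fun x hx => by
      simp [notMem_support.1 hx])]
  exact ofReal_norm_integral_le_of_enorm_le hφ₁.1 hφ₂.1 (fun _ => ENNReal.ofReal_ne_top)
    (fun _ => ENNReal.ofReal_ne_top) ENNReal.ofReal_ne_top fun q =>
      enorm_doubleDiff_mul_le hρ₁_nonneg hρ₂_nonneg hlam₁_pos hlam₂_pos hα₁ hα₂ hC_H hK_Holder
        hsep₁ hsep₂ hz hw hd₁.1 hd₂.1 q.2 q.1

/-- bi-parameter kernel estimate with two cancellative factors
(Lemma 2.4 of the paper). -/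
theorem biparameter_kernel_estimate
    {X₁ : Type*} {X₂ : Type*} [MeasurableSpace X₁] [MeasurableSpace X₂]
    (A₀ : ℝ) (hA₀ : 1 ≤ A₀)
    (ρ₁ : X₁ → X₁ → ℝ)
    (hρ₁_nonneg : ∀ x y, 0 ≤ ρ₁ x y)
    (hρ₁_eq : ∀ x y, ρ₁ x y = 0 ↔ x = y)
    (hρ₁_symm : ∀ x y, ρ₁ x y = ρ₁ y x)
    (hρ₁_tri : ∀ x y z, ρ₁ x z ≤ A₀ * (ρ₁ x y + ρ₁ y z))
    (ρ₂ : X₂ → X₂ → ℝ)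
    (hρ₂_nonneg : ∀ x y, 0 ≤ ρ₂ x y)
    (hρ₂_eq : ∀ x y, ρ₂ x y = 0 ↔ x = y)
    (hρ₂_symm : ∀ x y, ρ₂ x y = ρ₂ y x)
    (hρ₂_tri : ∀ x y z, ρ₂ x z ≤ A₀ * (ρ₂ x y + ρ₂ y z))
    (μ₁ : Measure X₁) (μ₂ : Measure X₂)
    (lam₁ : X₁ → ℝ → ℝ) (Clam₁ : ℝ) (hClam₁ : 1 ≤ Clam₁)
    (hlam₁_pos : ∀ x r, 0 < r → 0 < lam₁ x r)
    (hlam₁_mono : ∀ x r s, 0 < r → r ≤ s → lam₁ x r ≤ lam₁ x s)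
    (hlam₁_dbl : ∀ x r, 0 < r → lam₁ x (2 * r) ≤ Clam₁ * lam₁ x r)
    (hμ₁_lam : ∀ x r, 0 < r → μ₁ {y | ρ₁ x y < r} ≤ ENNReal.ofReal (lam₁ x r))
    (lam₂ : X₂ → ℝ → ℝ) (Clam₂ : ℝ) (hClam₂ : 1 ≤ Clam₂)
    (hlam₂_pos : ∀ x r, 0 < r → 0 < lam₂ x r)
    (hlam₂_mono : ∀ x r s, 0 < r → r ≤ s → lam₂ x r ≤ lam₂ x s)
    (hlam₂_dbl : ∀ x r, 0 < r → lam₂ x (2 * r) ≤ Clam₂ * lam₂ x r)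
    (hμ₂_lam : ∀ x r, 0 < r → μ₂ {y | ρ₂ x y < r} ≤ ENNReal.ofReal (lam₂ x r))
    (α₁ α₂ : ℝ) (hα₁ : 0 < α₁) (hα₂ : 0 < α₂)
    (C_K : ℝ) (hC_K : 1 ≤ C_K) (C_H : ℝ) (hC_H : 0 ≤ C_H)
    (K : X₁ × X₂ → X₁ × X₂ → ℂ)
    (hK_meas : Measurable (Function.uncurry K))
    (hK_Holder : ∀ x₁ x₂ y₁ y₂ z w,
        ρ₁ y₁ z ≤ ρ₁ x₁ z / C_K → ρ₂ y₂ w ≤ ρ₂ x₂ w / C_K →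
        ‖K (x₁, x₂) (y₁, y₂) - K (x₁, x₂) (y₁, w) - K (x₁, x₂) (z, y₂) + K (x₁, x₂) (z, w)‖
          ≤ C_H * (ρ₁ y₁ z ^ α₁ / (ρ₁ x₁ z ^ α₁ * lam₁ z (ρ₁ x₁ z)))
              * (ρ₂ y₂ w ^ α₂ / (ρ₂ x₂ w ^ α₂ * lam₂ w (ρ₂ x₂ w))))
    (φ₁ θ₁ : X₁ → ℂ) (φ₂ θ₂ : X₂ → ℂ)
    (hφ₁ : MemLp φ₁ 2 μ₁) (hφ₂ : MemLp φ₂ 2 μ₂)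
    (hθ₁ : MemLp θ₁ 2 μ₁) (hθ₂ : MemLp θ₂ 2 μ₂)
    (hdisj₁ : Function.support φ₁ ∩ Function.support θ₁ = ∅)
    (hdisj₂ : Function.support φ₂ ∩ Function.support θ₂ = ∅)
    (hsep₁ : ∀ x₁ ∈ Function.support θ₁, ∀ y₁ ∈ Function.support φ₁,
        ∀ z ∈ Function.support φ₁, ρ₁ y₁ z ≤ ρ₁ x₁ z / C_K)
    (hsep₂ : ∀ x₂ ∈ Function.support θ₂, ∀ y₂ ∈ Function.support φ₂,
        ∀ w ∈ Function.support φ₂, ρ₂ y₂ w ≤ ρ₂ x₂ w / C_K)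
    (hcancel₁ : (∫ y, φ₁ y ∂μ₁) = 0)
    (hcancel₂ : (∫ y, φ₂ y ∂μ₂) = 0) :
    ∀ z ∈ Function.support φ₁, ∀ w ∈ Function.support φ₂,
    ∀ d₁ d₂ : ℝ,
      IsLUB ((fun y₁ => ρ₁ y₁ z) '' Function.support φ₁) d₁ →
      IsLUB ((fun y₂ => ρ₂ y₂ w) '' Function.support φ₂) d₂ →
      Integrable (fun q : (X₁ × X₂) × (X₁ × X₂) =>
          K q.2 q.1 * φ₁ q.1.1 * φ₂ q.1.2 * θ₁ q.2.1 * θ₂ q.2.2)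
        ((μ₁.prod μ₂).prod (μ₁.prod μ₂)) →
      Integrable (fun q : (X₁ × X₂) × (X₁ × X₂) =>
          K q.2 (z, q.1.2) * φ₁ q.1.1 * φ₂ q.1.2 * θ₁ q.2.1 * θ₂ q.2.2)
        ((μ₁.prod μ₂).prod (μ₁.prod μ₂)) →
      Integrable (fun q : (X₁ × X₂) × (X₁ × X₂) =>
          K q.2 (q.1.1, w) * φ₁ q.1.1 * φ₂ q.1.2 * θ₁ q.2.1 * θ₂ q.2.2)
        ((μ₁.prod μ₂).prod (μ₁.prod μ₂)) →
      Integrable (fun q : (X₁ × X₂) × (X₁ × X₂) =>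
          K q.2 (z, w) * φ₁ q.1.1 * φ₂ q.1.2 * θ₁ q.2.1 * θ₂ q.2.2)
        ((μ₁.prod μ₂).prod (μ₁.prod μ₂)) →
      ENNReal.ofReal ‖∫ y : X₁ × X₂, (∫ x : X₁ × X₂,
            K x y * φ₁ y.1 * φ₂ y.2 * θ₁ x.1 * θ₂ x.2 ∂(μ₁.prod μ₂)) ∂(μ₁.prod μ₂)‖
        ≤ ENNReal.ofReal (C_H * d₁ ^ α₁ * d₂ ^ α₂)
            * eLpNorm φ₁ 2 μ₁ * eLpNorm φ₂ 2 μ₂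
            * μ₁ (Function.support φ₁) ^ ((1 : ℝ) / 2)
            * μ₂ (Function.support φ₂) ^ ((1 : ℝ) / 2)
            * (∫⁻ x₁ in Function.support θ₁,
                ENNReal.ofReal (ρ₁ x₁ z ^ (-α₁) * (lam₁ z (ρ₁ x₁ z))⁻¹ * ‖θ₁ x₁‖) ∂μ₁)
            * (∫⁻ x₂ in Function.support θ₂,
                ENNReal.ofReal (ρ₂ x₂ w ^ (-α₂) * (lam₂ w (ρ₂ x₂ w))⁻¹ * ‖θ₂ x₂‖) ∂μ₂) :=
  biparameter_kernel_estimate_general ρ₁ hρ₁_nonneg ρ₂ hρ₂_nonneg μ₁ μ₂ lam₁ hlam₁_pos hμ₁_lam lam₂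
    hlam₂_pos hμ₂_lam α₁ α₂ hα₁ hα₂ C_K C_H hC_H K hK_Holder φ₁ θ₁ φ₂ θ₂ hφ₁ hφ₂ hsep₁ hsep₂
    hcancel₁ hcancel₂
end

section
/- Let (X,ρ) be a quasimetric space with upper doubling measure μ and dominating function λ, let α > 0, C_K ≥ 1 and A ≥ 0, and let K : X × X → ℂ be measurable and satisfy the Hölder estimate |K(x,y) − K(x,z)| ≤ A · ρ(y,z)^{α}/(ρ(x,z)^{α} λ(z,ρ(x,z))) whenever ρ(y,z) ≤ ρ(x,z)/C_K. Let φ, θ ∈ L²(μ) with supports E_φ and E_θ such that: E_φ ∩ E_θ = ∅; for all x ∈ E_θ and all y, z ∈ E_φ one has ρ(y,z) ≤ ρ(x,z)/C_K; ∫ φ dμ = 0; and the functions (x,y) ↦ K(x,y)φ(y)θ(x) and (x,y) ↦ K(x,z)φ(y)θ(x) (for the fixed z below) are absolutely integrable on E_θ × E_φ. Then for every z ∈ E_φ, setting d := sup_{y ∈ E_φ} ρ(y,z), one has |∬ K(x,y) φ(y) θ(x) dμ(y) dμ(x)| ≤ A · d^{α} · ‖φ‖_{L²(μ)} · μ(E_φ)^{1/2}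 · ∫_{E_θ} ρ(x,z)^{−α} λ(z,ρ(x,z))^{−1} |θ(x)| dμ(x). -/
/-!
Since `∫ φ dμ = 0`, the inner integral does not change when `K(x,y)` is replaced by
`K(x,y) - K(x,z)`. The separation hypothesis puts every pair `(x,y) ∈ E_θ × E_φ` in the Hölder
regime, so `|K(x,y) - K(x,z)| ≤ A d^α ρ(x,z)^{-α} λ(z,ρ(x,z))^{-1}`; integrating, the `y`-integral
of `|φ|` over `E_φ` is at most `‖φ‖₂ μ(E_φ)^{1/2}` by Cauchy–Schwarz. As `ρ` and `λ` need not be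
measurable, the resulting bound in `x` is not measurable either, so it is integrated after
exchanging the order of integration (Tonelli, on σ-finite sets carrying `φ` and `θ`).
-/

open MeasureTheory ENNReal

section General

variable {α : Type*} [MeasurableSpace α] {μ : Measure α}

theorem enorm_integral_le_lintegral_enorm_sub {E : Type*} [NormedAddCommGroup E]
    [NormedSpace ℝ E] {f g : α → E} (hg : AEStronglyMeasurable g μ) (hg0 : ∫ x, g x ∂μ = 0) :
    ‖∫ x, f x ∂μ‖ₑ ≤ ∫⁻ x, ‖f x - g x‖ₑ ∂μ := by
  by_cases hf : Integrable f μ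
  · by_cases hfg : Integrable (f - g) μ
    · have hgi : Integrable g μ := by simpa using hf.sub hfg
      rw [← sub_zero (∫ x, f x ∂μ), ← hg0, ← integral_sub hf hgi]
      exact enorm_integral_le_lintegral_enorm _
    · rw [Integrable, not_and_or, or_iff_right (not_not.2 (hf.1.sub hg)), HasFiniteIntegral,
        not_lt, top_le_iff] at hfg
      simp only [Pi.sub_apply] at hfg
      simp [hfg]
  · simp [integral_undef hf]

theorem enorm_integral_mul_le_lintegral_of_integral_eq_zero {k φ : α → ℂ}
    (hφ : AEStronglyMeasurable φ μ) (hcancel : ∫ y, φ y ∂μ = 0) (w c : ℂ) :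
    ‖∫ y, k y * φ y * c ∂μ‖ₑ ≤ ∫⁻ y, ‖(k y - w) * φ y * c‖ₑ ∂μ := by
  refine (enorm_integral_le_lintegral_enorm_sub (g := fun y => w * φ y * c)
    ((aestronglyMeasurable_const.mul hφ).mul aestronglyMeasurable_const)
    (by simp [integral_mul_const, integral_const_mul, hcancel])).trans_eq ?_
  exact lintegral_congr fun y => by ring_nf

theorem MeasureTheory.AEFinStronglyMeasurable.exists_sigmaFinite_forall_lintegral_eq {E : Type*}
    [NormedAddCommGroup E] {f : α → E} (hf : AEFinStronglyMeasurable f μ) :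
    ∃ t, SigmaFinite (μ.restrict t) ∧
      ∀ F : α → ℝ≥0∞, (∀ x, f x = 0 → F x = 0) → ∫⁻ x, F x ∂μ = ∫⁻ x in t, F x ∂μ := by
  obtain ⟨t, ht, hft, htμ⟩ := hf.exists_set_sigmaFinite
  refine ⟨t, htμ, fun F hF => ?_⟩
  have hF_compl : ∫⁻ x in tᶜ, F x ∂μ = 0 :=
    (lintegral_congr_ae (hft.mono fun x hx => hF x hx)).trans lintegral_zero
  rw [← lintegral_add_compl F ht, hF_compl, add_zero]

theorem lintegral_enorm_le_eLpNorm_two_mul_measure_support_rpow {E : Type*}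
    [NormedAddCommGroup E] {f : α → E} (hf : AEStronglyMeasurable f μ) :
    ∫⁻ x, ‖f x‖ₑ ∂μ ≤ eLpNorm f 2 μ * μ (Function.support f) ^ (1 / 2 : ℝ) := by
  set s := Function.support f
  have hsupp : Function.support (fun x => ‖f x‖ₑ) ⊆ s :=
    fun x hx => Function.mem_support.2 (by simpa using hx)
  rw [← setLIntegral_eq_of_support_subset hsupp, ← eLpNorm_one_eq_lintegral_enorm]
  calc eLpNorm f 1 (μ.restrict s)
      ≤ eLpNorm f 2 (μ.restrict s) * μ.restrict s Set.univ ^ (1 / (1 : ℝ≥0∞).toReal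
          - 1 / (2 : ℝ≥0∞).toReal) :=
        eLpNorm_le_eLpNorm_mul_rpow_measure_univ one_le_two hf.restrict
    _ ≤ eLpNorm f 2 μ * μ s ^ (1 / 2 : ℝ) := by
        have hexp : 1 / (1 : ℝ≥0∞).toReal - 1 / (2 : ℝ≥0∞).toReal = 1 / 2 := by norm_num
        rw [Measure.restrict_apply_univ, hexp]
        exact mul_le_mul_left (eLpNorm_restrict_le f 2 μ s) _

theorem lintegral_lintegral_le_lintegral_mul_lintegral {β : Type*} [MeasurableSpace β]
    {ν : Measure β} [SFinite μ] [SFinite ν] {D : α → β → ℝ≥0∞}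
    (hD : AEMeasurable (Function.uncurry D) (μ.prod ν)) {a : β → ℝ≥0∞} (ha : AEMeasurable a ν)
    (ha_top : ∀ y, a y ≠ ∞) {g : α → ℝ≥0∞} (hDle : ∀ x y, D x y ≤ a y * g x) :
    ∫⁻ x, ∫⁻ y, D x y ∂ν ∂μ ≤ (∫⁻ y, a y ∂ν) * ∫⁻ x, g x ∂μ := by
  rw [lintegral_lintegral_swap hD, ← lintegral_mul_const'' _ ha]
  refine lintegral_mono fun y => ?_
  rw [← lintegral_const_mul' _ _ (ha_top y)]
  exact lintegral_mono fun x => hDle x y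

end General

section Kernel

variable {X : Type*} {ρ : X → X → ℝ} {lam : X → ℝ → ℝ} {K : X → X → ℂ} {α C_K A : ℝ}

theorem norm_kernel_sub_le (hρ_nonneg : ∀ x y, 0 ≤ ρ x y)
    (hlam_pos : ∀ x r, 0 < r → 0 < lam x r) (hα : 0 < α) (hA : 0 ≤ A)
    (hK_Holder : ∀ x y z, ρ y z ≤ ρ x z / C_K →
      ‖K x y - K x z‖ ≤ A * (ρ y z ^ α / (ρ x z ^ α * lam z (ρ x z))))
    {x y z : X} {d : ℝ} (hyz : ρ y z ≤ ρ x z / C_K) (hd : ρ y z ≤ d) :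
    ‖K x y - K x z‖ ≤ A * d ^ α * (ρ x z ^ (-α) * (lam z (ρ x z))⁻¹) := by
  have hden : 0 ≤ ρ x z ^ α * lam z (ρ x z) := by
    rcases (hρ_nonneg x z).eq_or_lt with h | h
    · rw [← h, Real.zero_rpow hα.ne', zero_mul]
    · exact (mul_pos (Real.rpow_pos_of_pos h α) (hlam_pos z _ h)).le
  calc ‖K x y - K x z‖ ≤ A * (ρ y z ^ α / (ρ x z ^ α * lam z (ρ x z))) := hK_Holder x y z hyz
    _ ≤ A * (d ^ α / (ρ x z ^ α * lam z (ρ x z))) := by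
        gcongr
        exact hρ_nonneg y z
    _ = A * d ^ α * (ρ x z ^ (-α) * (lam z (ρ x z))⁻¹) := by
        rw [Real.rpow_neg (hρ_nonneg x z), div_eq_mul_inv, mul_inv]
        ring

theorem enorm_kernel_sub_mul_le (hρ_nonneg : ∀ x y, 0 ≤ ρ x y)
    (hlam_pos : ∀ x r, 0 < r → 0 < lam x r) (hα : 0 < α) (hA : 0 ≤ A)
    (hK_Holder : ∀ x y z, ρ y z ≤ ρ x z / C_K →
      ‖K x y - K x z‖ ≤ A * (ρ y z ^ α / (ρ x z ^ α * lam z (ρ x z))))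
    {φ θ : X → ℂ} (hsep : ∀ x ∈ Function.support θ, ∀ y ∈ Function.support φ,
      ∀ z ∈ Function.support φ, ρ y z ≤ ρ x z / C_K)
    {z : X} (hz : z ∈ Function.support φ) {d : ℝ}
    (hd : IsLUB ((fun y => ρ y z) '' Function.support φ) d) (x y : X) :
    ‖(K x y - K x z) * φ y * θ x‖ₑ ≤ ENNReal.ofReal (A * d ^ α) * ‖φ y‖ₑ
      * ENNReal.ofReal (ρ x z ^ (-α) * (lam z (ρ x z))⁻¹ * ‖θ x‖) := by
  by_cases hθx : θ x = 0
  · simp [hθx]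
  by_cases hφy : φ y = 0
  · simp [hφy]
  have hd0 : 0 ≤ d := (hρ_nonneg z z).trans (hd.1 ⟨z, hz, rfl⟩)
  have hK := norm_kernel_sub_le hρ_nonneg hlam_pos hα hA hK_Holder (hsep x hθx y hφy z hz)
    (hd.1 ⟨y, hφy, rfl⟩)
  have hbound : ‖(K x y - K x z) * φ y * θ x‖
      ≤ A * d ^ α * ‖φ y‖ * (ρ x z ^ (-α) * (lam z (ρ x z))⁻¹ * ‖θ x‖) := by
    rw [norm_mul, norm_mul]
    calc ‖K x y - K x z‖ * ‖φ y‖ * ‖θ x‖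
        ≤ A * d ^ α * (ρ x z ^ (-α) * (lam z (ρ x z))⁻¹) * ‖φ y‖ * ‖θ x‖ := by gcongr
      _ = A * d ^ α * ‖φ y‖ * (ρ x z ^ (-α) * (lam z (ρ x z))⁻¹ * ‖θ x‖) := by ring
  rw [← ofReal_norm, ← ofReal_norm, ← ENNReal.ofReal_mul (by positivity),
    ← ENNReal.ofReal_mul (by positivity)]
  exact ENNReal.ofReal_le_ofReal hbound

end Kernel

theorem one_parameter_kernel_estimate_general
    {X : Type*} [MeasurableSpace X]
    (ρ : X → X → ℝ)
    (hρ_nonneg : ∀ x y, 0 ≤ ρ x y)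
    (μ : Measure X)
    (lam : X → ℝ → ℝ)
    (hlam_pos : ∀ x r, 0 < r → 0 < lam x r)
    (α : ℝ) (hα : 0 < α) (C_K : ℝ) (A : ℝ) (hA : 0 ≤ A)
    (K : X → X → ℂ) (hK_meas : Measurable (Function.uncurry K))
    (hK_Holder : ∀ x y z, ρ y z ≤ ρ x z / C_K →
      ‖K x y - K x z‖ ≤ A * (ρ y z ^ α / (ρ x z ^ α * lam z (ρ x z))))
    (φ θ : X → ℂ) (hφ : MemLp φ 2 μ) (hθ : MemLp θ 2 μ)
    (hsep : ∀ x ∈ Function.support θ, ∀ y ∈ Function.support φ,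
      ∀ z ∈ Function.support φ, ρ y z ≤ ρ x z / C_K)
    (hcancel : (∫ y, φ y ∂μ) = 0)
    (z : X) (hz : z ∈ Function.support φ)
    (d : ℝ) (hd : IsLUB ((fun y => ρ y z) '' Function.support φ) d) :
    ENNReal.ofReal ‖∫ x, (∫ y, K x y * φ y * θ x ∂μ) ∂μ‖
      ≤ ENNReal.ofReal (A * d ^ α) * eLpNorm φ 2 μ
          * μ (Function.support φ) ^ ((1 : ℝ) / 2)
          * ∫⁻ x in Function.support θ,
              ENNReal.ofReal (ρ x z ^ (-α) * (lam z (ρ x z))⁻¹ * ‖θ x‖) ∂μ := by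
  set C₀ := ENNReal.ofReal (A * d ^ α)
  set g : X → ℝ≥0∞ := fun x => ENNReal.ofReal (ρ x z ^ (-α) * (lam z (ρ x z))⁻¹ * ‖θ x‖)
  set D : X → X → ℝ≥0∞ := fun x y => ‖(K x y - K x z) * φ y * θ x‖ₑ
  obtain ⟨sθ, hsθ, hθ_on⟩ := (hθ.aefinStronglyMeasurable two_ne_zero ofNat_ne_top)
    |>.exists_sigmaFinite_forall_lintegral_eq
  obtain ⟨sφ, hsφ, hφ_on⟩ := (hφ.aefinStronglyMeasurable two_ne_zero ofNat_ne_top)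
    |>.exists_sigmaFinite_forall_lintegral_eq
  have hinner : ∀ x, ‖∫ y, K x y * φ y * θ x ∂μ‖ₑ ≤ ∫⁻ y in sφ, D x y ∂μ := fun x => by
    rw [← hφ_on _ fun y hy => by simp [D, hy]]
    exact enorm_integral_mul_le_lintegral_of_integral_eq_zero hφ.1 hcancel _ _
  have hD_meas : AEMeasurable (Function.uncurry D) ((μ.restrict sθ).prod (μ.restrict sφ)) := by
    have hKz : Measurable fun x => K x z := hK_meas.comp (measurable_id.prodMk measurable_const)
    exact (((hK_meas.aestronglyMeasurable.sub (hKz.aestronglyMeasurable.comp_fst)).mul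
      hφ.1.restrict.comp_snd).mul hθ.1.restrict.comp_fst).enorm
  have hg_supp : Function.support g ⊆ Function.support θ :=
    Function.support_subset_iff'.2 fun x hx => by simp [g, Function.notMem_support.1 hx]
  rw [ofReal_norm]
  calc ‖∫ x, ∫ y, K x y * φ y * θ x ∂μ ∂μ‖ₑ
      ≤ ∫⁻ x, ‖∫ y, K x y * φ y * θ x ∂μ‖ₑ ∂μ := enorm_integral_le_lintegral_enorm _
    _ = ∫⁻ x in sθ, ‖∫ y, K x y * φ y * θ x ∂μ‖ₑ ∂μ := hθ_on _ fun x hx => by simp [hx]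
    _ ≤ ∫⁻ x in sθ, ∫⁻ y in sφ, D x y ∂μ ∂μ := lintegral_mono hinner
    _ ≤ (∫⁻ y in sφ, C₀ * ‖φ y‖ₑ ∂μ) * ∫⁻ x in sθ, g x ∂μ :=
        lintegral_lintegral_le_lintegral_mul_lintegral hD_meas
          (hφ.1.restrict.enorm.const_mul C₀) (fun _ => mul_ne_top ofReal_ne_top enorm_ne_top)
          (enorm_kernel_sub_mul_le hρ_nonneg hlam_pos hα hA hK_Holder hsep hz hd)
    _ ≤ C₀ * (eLpNorm φ 2 μ * μ (Function.support φ) ^ ((1 : ℝ) / 2))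
          * ∫⁻ x in Function.support θ, g x ∂μ := by
        rw [lintegral_const_mul' _ _ ofReal_ne_top, setLIntegral_eq_of_support_subset hg_supp]
        gcongr
        · exact (lintegral_mono' Measure.restrict_le_self le_rfl).trans
            (lintegral_enorm_le_eLpNorm_two_mul_measure_support_rpow hφ.1)
        · exact Measure.restrict_le_self
    _ = _ := by ring

/-- one-parameter kernel estimate with one cancellative factor
(Lemma 2.5 of the paper). -/
theorem one_parameter_kernel_estimate
    {X : Type*} [MeasurableSpace X]
    (ρ : X → X → ℝ) (A₀ : ℝ) (hA₀ : 1 ≤ A₀)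
    (hρ_nonneg : ∀ x y, 0 ≤ ρ x y)
    (hρ_eq : ∀ x y, ρ x y = 0 ↔ x = y)
    (hρ_symm : ∀ x y, ρ x y = ρ y x)
    (hρ_tri : ∀ x y z, ρ x z ≤ A₀ * (ρ x y + ρ y z))
    (μ : Measure X)
    (lam : X → ℝ → ℝ) (Clam : ℝ) (hClam : 1 ≤ Clam)
    (hlam_pos : ∀ x r, 0 < r → 0 < lam x r)
    (hlam_mono : ∀ x r s, 0 < r → r ≤ s → lam x r ≤ lam x s)
    (hlam_dbl : ∀ x r, 0 < r → lam x (2 * r) ≤ Clam * lam x r)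
    (hμ_lam : ∀ x r, 0 < r → μ {y | ρ x y < r} ≤ ENNReal.ofReal (lam x r))
    (α : ℝ) (hα : 0 < α) (C_K : ℝ) (hC_K : 1 ≤ C_K) (A : ℝ) (hA : 0 ≤ A)
    (K : X → X → ℂ) (hK_meas : Measurable (Function.uncurry K))
    (hK_Holder : ∀ x y z, ρ y z ≤ ρ x z / C_K →
      ‖K x y - K x z‖ ≤ A * (ρ y z ^ α / (ρ x z ^ α * lam z (ρ x z))))
    (φ θ : X → ℂ) (hφ : MemLp φ 2 μ) (hθ : MemLp θ 2 μ)
    (hdisj : Function.support φ ∩ Function.support θ = ∅)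
    (hsep : ∀ x ∈ Function.support θ, ∀ y ∈ Function.support φ,
      ∀ z ∈ Function.support φ, ρ y z ≤ ρ x z / C_K)
    (hcancel : (∫ y, φ y ∂μ) = 0)
    (z : X) (hz : z ∈ Function.support φ)
    (hint : Integrable (fun p : X × X => K p.1 p.2 * φ p.2 * θ p.1)
      ((μ.restrict (Function.support θ)).prod (μ.restrict (Function.support φ))))
    (hint_z : Integrable (fun p : X × X => K p.1 z * φ p.2 * θ p.1)
      ((μ.restrict (Function.support θ)).prod (μ.restrict (Function.support φ))))
    (d : ℝ) (hd : IsLUB ((fun y => ρ y z) '' Function.support φ) d) :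
    ENNReal.ofReal ‖∫ x, (∫ y, K x y * φ y * θ x ∂μ) ∂μ‖
      ≤ ENNReal.ofReal (A * d ^ α) * eLpNorm φ 2 μ
          * μ (Function.support φ) ^ ((1 : ℝ) / 2)
          * ∫⁻ x in Function.support θ,
              ENNReal.ofReal (ρ x z ^ (-α) * (lam z (ρ x z))⁻¹ * ‖θ x‖) ∂μ :=
  one_parameter_kernel_estimate_general ρ hρ_nonneg μ lam hlam_pos α hα C_K A hA K hK_meas hK_Holder
    φ θ hφ hθ hsep hcancel z hz d hd
end

section
/- Let λ : (0,∞) → (0,∞) be non-decreasing with λ(2r) ≤ C_λ λ(r) for all r > 0, where C_λ ≥ 1, and set t := log₂ C_λ. Let α > 0, γ := α/(2(α + t)), and 𝒞 ≥ 1. Suppose 0 < ℓ ≤ ℓ' and d ≥ 𝒞 ℓ^{γ}(ℓ')^{1−γ}, and set D := ℓ + ℓ' + d. Then ℓ^{α}/(d^{α} λ(d)) ≤ C' · ℓ^{α/2}(ℓ')^{α/2}/(D^{α} λ(D)), where C' depends only on C_λ, α and 𝒞. -/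
open Real

private lemma doubling_iter (lam : ℝ → ℝ) (Clam : ℝ) (hClam : 1 ≤ Clam)
    (hd : ∀ r, 0 < r → lam (2 * r) ≤ Clam * lam r) :
    ∀ n : ℕ, ∀ r, 0 < r → lam (2 ^ n * r) ≤ Clam ^ n * lam r := by
  intro n
  induction n with
  | zero => intro r hr; simp
  | succ k ih =>
    intro r hr
    have h1 : (2:ℝ) ^ (k+1) * r = 2 * (2 ^ k * r) := by ring
    rw [h1]
    calc lam (2 * (2 ^ k * r)) ≤ Clam * lam (2 ^ k * r) := hd _ (by positivity)
      _ ≤ Clam * (Clam ^ k * lam r) :=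
          mul_le_mul_of_nonneg_left (ih r hr) (by linarith)
      _ = Clam ^ (k+1) * lam r := by ring

private lemma doubling_bound (lam : ℝ → ℝ) (Clam : ℝ) (hClam : 1 ≤ Clam)
    (hpos : ∀ r, 0 < r → 0 < lam r)
    (hmono : ∀ r s, 0 < r → r ≤ s → lam r ≤ lam s)
    (hdb : ∀ r, 0 < r → lam (2 * r) ≤ Clam * lam r)
    (d D : ℝ) (hdpos : 0 < d) (hdD : d ≤ D) :
    lam D ≤ Clam * (D / d) ^ (Real.logb 2 Clam) * lam d := by
  have hClam0 : (0:ℝ) < Clam := by linarith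
  have hDpos : 0 < D := lt_of_lt_of_le hdpos hdD
  have hDd0 : (0:ℝ) < D / d := div_pos hDpos hdpos
  have hDd1 : 1 ≤ D / d := (one_le_div hdpos).2 hdD
  set x := Real.logb 2 (D / d) with hx
  have hx0 : 0 ≤ x := Real.logb_nonneg one_lt_two hDd1
  set n := ⌈x⌉₊ with hn
  have hxn : x ≤ (n:ℝ) := Nat.le_ceil x
  have h2x : (2:ℝ) ^ x = D / d := Real.rpow_logb two_pos (by norm_num) hDd0
  have hdiv : D / d ≤ (2:ℝ) ^ n := by
    have h := Real.rpow_le_rpow_of_exponent_le one_le_two hxn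
    rw [Real.rpow_natCast] at h
    rw [← h2x]; exact h
  have hDle : D ≤ 2 ^ n * d := by
    rw [← div_le_iff₀ hdpos] at *
    exact hdiv
  have h1 : lam D ≤ lam (2 ^ n * d) := hmono _ _ hDpos hDle
  have h2 : lam (2 ^ n * d) ≤ Clam ^ n * lam d := doubling_iter lam Clam hClam hdb n d hdpos
  have h3 : Clam ^ n ≤ Clam * (D / d) ^ (Real.logb 2 Clam) := by
    have hnx : (n:ℝ) ≤ x + 1 := le_of_lt (Nat.ceil_lt_add_one hx0)
    have h4 : Clam ^ (n:ℝ) ≤ Clam ^ (x + 1) :=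
      Real.rpow_le_rpow_of_exponent_le hClam hnx
    rw [Real.rpow_natCast] at h4
    have h5 : Clam ^ (x + 1) = Clam * Clam ^ x := by
      rw [Real.rpow_add hClam0, Real.rpow_one]; ring
    have h6 : Clam ^ x = (D / d) ^ (Real.logb 2 Clam) := by
      rw [Real.rpow_def_of_pos hClam0, Real.rpow_def_of_pos hDd0]
      congr 1
      rw [hx, Real.logb, Real.logb]
      ring
    calc Clam ^ n ≤ Clam ^ (x+1) := h4
      _ = Clam * (D / d) ^ (Real.logb 2 Clam) := by rw [h5, h6]
  have hlamd : 0 < lam d := hpos d hdpos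
  calc lam D ≤ Clam ^ n * lam d := h1.trans h2
    _ ≤ Clam * (D / d) ^ (Real.logb 2 Clam) * lam d :=
        mul_le_mul_of_nonneg_right h3 hlamd.le

/-- separated-cubes comparison inequality (Lemma 5.2 of the paper). -/
theorem separated_comparison
    (Clam α CC : ℝ) (hClam : 1 ≤ Clam) (hα : 0 < α) (hCC : 1 ≤ CC) :
    ∃ C' : ℝ, 0 < C' ∧
      ∀ lam : ℝ → ℝ,
        (∀ r, 0 < r → 0 < lam r) →
        (∀ r s, 0 < r → r ≤ s → lam r ≤ lam s) →
        (∀ r, 0 < r → lam (2 * r) ≤ Clam * lam r) →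
        ∀ ℓ ℓ' d : ℝ, 0 < ℓ → ℓ ≤ ℓ' →
          CC * ℓ ^ (α / (2 * (α + Real.logb 2 Clam)))
              * ℓ' ^ (1 - α / (2 * (α + Real.logb 2 Clam))) ≤ d →
          ℓ ^ α / (d ^ α * lam d)
            ≤ C' * (ℓ ^ (α / 2) * ℓ' ^ (α / 2) / ((ℓ + ℓ' + d) ^ α * lam (ℓ + ℓ' + d))) := by
  set t := Real.logb 2 Clam with ht
  have hClam0 : (0:ℝ) < Clam := by linarith
  have ht0 : 0 ≤ t := Real.logb_nonneg one_lt_two hClam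
  have hαt : 0 < α + t := by linarith
  refine ⟨Clam * 3 ^ (α + t), by positivity, ?_⟩
  intro lam hpos hmono hdoub ℓ ℓ' d hℓ hℓℓ' hd
  set γ := α / (2 * (α + t)) with hγ
  have hℓ' : 0 < ℓ' := lt_of_lt_of_le hℓ hℓℓ'
  have hX : 0 < ℓ ^ γ * ℓ' ^ (1 - γ) := by positivity
  have hXd : ℓ ^ γ * ℓ' ^ (1 - γ) ≤ d := by
    calc ℓ ^ γ * ℓ' ^ (1 - γ) ≤ CC * ℓ ^ γ * ℓ' ^ (1 - γ) := by nlinarith [hX.le]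
      _ ≤ d := hd
  have hdpos : 0 < d := lt_of_lt_of_le hX hXd
  set D := ℓ + ℓ' + d with hDdef
  have hDpos : 0 < D := by positivity
  have hdD : d ≤ D := by simp only [hDdef]; linarith
  have hγαt : γ * (α + t) = α / 2 := by
    rw [hγ]; field_simp
  -- key claim
  have key : ℓ ^ (α/2) * D ^ (α+t) ≤ 3 ^ (α+t) * (ℓ' ^ (α/2) * d ^ (α+t)) := by
    rcases le_total ℓ' d with h | h
    · have hD3 : D ≤ 3 * d := by simp only [hDdef]; linarith
      have h1 : D ^ (α+t) ≤ 3 ^ (α+t) * d ^ (α+t) := by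
        rw [← Real.mul_rpow (by norm_num) hdpos.le]
        exact Real.rpow_le_rpow hDpos.le hD3 hαt.le
      have h2 : ℓ ^ (α/2) ≤ ℓ' ^ (α/2) := Real.rpow_le_rpow hℓ.le hℓℓ' (by linarith)
      calc ℓ ^ (α/2) * D ^ (α+t) ≤ ℓ' ^ (α/2) * (3 ^ (α+t) * d ^ (α+t)) :=
            mul_le_mul h2 h1 (by positivity) (by positivity)
        _ = 3 ^ (α+t) * (ℓ' ^ (α/2) * d ^ (α+t)) := by ring
    · have hD3 : D ≤ 3 * ℓ' := by simp only [hDdef]; linarith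
      have hdge : ℓ ^ (α/2) * ℓ' ^ (α + t - α/2) ≤ d ^ (α+t) := by
        calc ℓ ^ (α/2) * ℓ' ^ (α + t - α/2) = (ℓ ^ γ * ℓ' ^ (1-γ)) ^ (α+t) := by
              have e : (1 - γ) * (α + t) = α + t - α / 2 := by
                rw [sub_mul, one_mul, hγαt]
              rw [Real.mul_rpow (by positivity) (by positivity),
                ← Real.rpow_mul hℓ.le, ← Real.rpow_mul hℓ'.le, hγαt, e]
          _ ≤ d ^ (α+t) := Real.rpow_le_rpow hX.le hXd hαt.le
      calc ℓ ^ (α/2) * D ^ (α+t) ≤ ℓ ^ (α/2) * (3 ^ (α+t) * ℓ' ^ (α+t)) := by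
            apply mul_le_mul_of_nonneg_left _ (by positivity)
            rw [← Real.mul_rpow (by norm_num) hℓ'.le]
            exact Real.rpow_le_rpow hDpos.le hD3 hαt.le
        _ = 3 ^ (α+t) * (ℓ' ^ (α/2) * (ℓ ^ (α/2) * ℓ' ^ (α + t - α/2))) := by
            rw [show ℓ' ^ (α+t) = ℓ' ^ (α/2) * ℓ' ^ (α + t - α/2) by
              rw [← Real.rpow_add hℓ']; ring_nf]
            ring
        _ ≤ 3 ^ (α+t) * (ℓ' ^ (α/2) * d ^ (α+t)) := by
            apply mul_le_mul_of_nonneg_left _ (by positivity)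
            exact mul_le_mul_of_nonneg_left hdge (by positivity)
  -- doubling bound
  have hlamD : lam D ≤ Clam * (D / d) ^ t * lam d :=
    doubling_bound lam Clam hClam hpos hmono hdoub d D hdpos hdD
  have hlamd : 0 < lam d := hpos d hdpos
  have hlamD0 : 0 < lam D := hpos D hDpos
  rw [mul_div_assoc']
  rw [div_le_div_iff₀ (by positivity) (by positivity)]
  have hdt : (0:ℝ) < d ^ t := Real.rpow_pos_of_pos hdpos t
  apply le_of_mul_le_mul_right _ hdt
  have e1 : ℓ ^ α = ℓ ^ (α/2) * ℓ ^ (α/2) := by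
    rw [← Real.rpow_add hℓ]; norm_num
  have e2 : D ^ (α+t) = D ^ α * D ^ t := Real.rpow_add hDpos α t
  have e3 : d ^ (α+t) = d ^ α * d ^ t := Real.rpow_add hdpos α t
  have e4 : (D/d) ^ t = D ^ t / d ^ t := Real.div_rpow hDpos.le hdpos.le t
  calc ℓ ^ α * (D ^ α * lam D) * d ^ t
      = (ℓ ^ α * D ^ α * d ^ t) * lam D := by ring
    _ ≤ (ℓ ^ α * D ^ α * d ^ t) * (Clam * (D/d) ^ t * lam d) :=
        mul_le_mul_of_nonneg_left hlamD (by positivity)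
    _ = Clam * ((ℓ ^ (α/2) * (ℓ ^ (α/2) * D ^ (α+t))) * lam d) := by
        rw [e4, e1, e2]; field_simp
    _ ≤ Clam * ((ℓ ^ (α/2) * (3 ^ (α+t) * (ℓ' ^ (α/2) * d ^ (α+t)))) * lam d) := by
        apply mul_le_mul_of_nonneg_left _ hClam0.le
        apply mul_le_mul_of_nonneg_right _ hlamd.le
        exact mul_le_mul_of_nonneg_left key (by positivity)
    _ = Clam * 3 ^ (α+t) * (ℓ ^ (α/2) * ℓ' ^ (α/2)) * (d ^ α * lam d) * d ^ t := by
        rw [e3]; ring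
end

section
/- Let (X,ρ) be a quasimetric space with an upper doubling Borel measure μ with dominating function λ and constant C_λ, let α > 0 and c > 0. Let w ∈ X, let E ⊆ X be measurable, and suppose there is R > 0 with B(w,R) ⊆ E and R ≥ c ℓ^{1/2} L^{1/2}, where 0 < ℓ ≤ L. Then ℓ^{α} ∫_{X ∖ E} ρ(x,w)^{−α} λ(w, ρ(x,w))^{−1} dμ(x) ≤ C' (ℓ/L)^{α/2}, where C' depends only on C_λ, α and c. -/
open MeasureTheory

/-- tail estimate outside a set containing a ball of radius
comparable to the geometric mean of the side lengths. -/
theorem nested_tail_estimate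
    (Clam α c : ℝ) (hClam : 1 ≤ Clam) (hα : 0 < α) (hc : 0 < c) :
    ∃ C' : ℝ, 0 < C' ∧
      ∀ (X : Type) [MeasurableSpace X]
        (ρ : X → X → ℝ) (A₀ : ℝ) (μ : Measure X) (lam : X → ℝ → ℝ)
        (w : X) (E : Set X) (R ℓ L : ℝ),
        1 ≤ A₀ →
        (∀ x y, 0 ≤ ρ x y) → (∀ x y, ρ x y = 0 ↔ x = y) →
        (∀ x y, ρ x y = ρ y x) → (∀ x y z, ρ x z ≤ A₀ * (ρ x y + ρ y z)) →
        (∀ x r, 0 < r → 0 < lam x r) →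
        (∀ x r s, 0 < r → r ≤ s → lam x r ≤ lam x s) →
        (∀ x r, 0 < r → lam x (2 * r) ≤ Clam * lam x r) →
        (∀ x r, 0 < r → μ {y | ρ x y < r} ≤ ENNReal.ofReal (lam x r)) →
        MeasurableSet E →
        (Measurable fun x => ρ x w) →
        (Measurable fun x => lam w (ρ x w)) →
        0 < ℓ → ℓ ≤ L →
        {y | ρ w y < R} ⊆ E →
        c * ℓ ^ ((1 : ℝ) / 2) * L ^ ((1 : ℝ) / 2) ≤ R →
        ENNReal.ofReal (ℓ ^ α) *
            ∫⁻ x in Eᶜ, ENNReal.ofReal (ρ x w ^ (-α) * (lam w (ρ x w))⁻¹) ∂μ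
          ≤ ENNReal.ofReal (C' * (ℓ / L) ^ (α / 2)) := by
  have hr0 : (0:ℝ) ≤ (2:ℝ) ^ (-α) := Real.rpow_nonneg (by norm_num) _
  have hr1 : (2:ℝ) ^ (-α) < 1 :=
    Real.rpow_lt_one_of_one_lt_of_neg (by norm_num) (by linarith)
  have h2 : (0:ℝ) < 1 - (2:ℝ) ^ (-α) := by linarith
  have hcα : (0:ℝ) < c ^ (-α) := Real.rpow_pos_of_pos hc _
  refine ⟨Clam * c ^ (-α) / (1 - (2:ℝ) ^ (-α)),
    div_pos (mul_pos (by linarith) hcα) h2, ?_⟩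
  intro X _ ρ A₀ μ lam w E R ℓ L hA₀ hρ0 hρeq hρsym hρtri hlam0 hlammono
    hdbl hμball hE hmρ hmlam hℓ hℓL hball hcR
  have hL : 0 < L := lt_of_lt_of_le hℓ hℓL
  have hgm : (0:ℝ) < c * ℓ ^ ((1:ℝ)/2) * L ^ ((1:ℝ)/2) := by positivity
  have hR : 0 < R := lt_of_lt_of_le hgm hcR
  set f : X → ENNReal := fun x => ENNReal.ofReal (ρ x w ^ (-α) * (lam w (ρ x w))⁻¹)
    with hf
  -- step 1 : Eᶜ ⊆ {x | R ≤ ρ x w}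
  have hsub : Eᶜ ⊆ {x | R ≤ ρ x w} := by
    intro x hx
    by_contra h
    exact hx (hball (by simpa [hρsym w x] using h))
  -- annuli
  set A : ℕ → Set X := fun k => {x | 2 ^ k * R ≤ ρ x w ∧ ρ x w < 2 ^ (k+1) * R}
    with hA
  have hcover : {x | R ≤ ρ x w} ⊆ ⋃ k, A k := by
    intro x hx
    have hx' : R ≤ ρ x w := hx
    obtain ⟨n, hn⟩ := pow_unbounded_of_one_lt (ρ x w / R) (by norm_num : (1:ℝ) < 2)
    have hn' : ρ x w < 2 ^ n * R := by
      rw [← div_lt_iff₀ hR] at *; linarith [hn]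
    -- least n with ρ x w < 2^n * R
    have hP : ∃ n, ρ x w < 2 ^ n * R := ⟨n, hn'⟩
    classical
    set m := Nat.find hP with hm
    have hmlt : ρ x w < 2 ^ m * R := Nat.find_spec hP
    have hm0 : m ≠ 0 := by
      intro h0
      rw [h0] at hmlt
      simp at hmlt
      linarith
    obtain ⟨k, hk⟩ := Nat.exists_eq_succ_of_ne_zero hm0
    refine Set.mem_iUnion.2 ⟨k, ?_, ?_⟩
    · have := Nat.find_min hP (m := k) (by omega)
      push_neg at this
      exact this
    · rw [← Nat.succ_eq_add_one, ← hk]; exact hmlt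
  have hmeasA : ∀ k, MeasurableSet (A k) := by
    intro k
    exact (measurableSet_le measurable_const hmρ).inter
      (measurableSet_lt hmρ measurable_const)
  -- per-annulus bound
  have hbound : ∀ k : ℕ, ∫⁻ x in A k, f x ∂μ ≤
      ENNReal.ofReal (Clam * ((2:ℝ) ^ k * R) ^ (-α)) := by
    intro k
    have hck : (0:ℝ) < 2 ^ k * R := by positivity
    have hlamck : 0 < lam w (2 ^ k * R) := hlam0 _ _ hck
    have step1 : ∫⁻ x in A k, f x ∂μ ≤
        ∫⁻ _ in A k,
          ENNReal.ofReal (((2:ℝ) ^ k * R) ^ (-α) * (lam w (2 ^ k * R))⁻¹) ∂μ := by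
      refine setLIntegral_mono measurable_const ?_
      intro x hx
      obtain ⟨hx1, _⟩ := hx
      refine ENNReal.ofReal_le_ofReal ?_
      have h1 : ρ x w ^ (-α) ≤ ((2:ℝ) ^ k * R) ^ (-α) :=
        Real.rpow_le_rpow_of_nonpos hck hx1 (by linarith)
      have h2' : lam w (2 ^ k * R) ≤ lam w (ρ x w) := hlammono _ _ _ hck hx1
      have h3 : (lam w (ρ x w))⁻¹ ≤ (lam w (2 ^ k * R))⁻¹ :=
        inv_anti₀ hlamck h2'
      exact mul_le_mul h1 h3 (inv_nonneg.2 (hlam0 _ _ (hck.trans_le hx1)).le)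
        (Real.rpow_nonneg hck.le _)
    rw [setLIntegral_const] at step1
    have hμA : μ (A k) ≤ ENNReal.ofReal (Clam * lam w (2 ^ k * R)) := by
      have hsub2 : A k ⊆ {y | ρ w y < 2 ^ (k+1) * R} := by
        intro x hx
        simpa [hρsym w x] using hx.2
      calc μ (A k) ≤ μ {y | ρ w y < 2 ^ (k+1) * R} := measure_mono hsub2
        _ ≤ ENNReal.ofReal (lam w (2 ^ (k+1) * R)) := hμball _ _ (by positivity)
        _ ≤ ENNReal.ofReal (Clam * lam w (2 ^ k * R)) := by
            refine ENNReal.ofReal_le_ofReal ?_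
            have : (2:ℝ) ^ (k+1) * R = 2 * (2 ^ k * R) := by ring
            rw [this]
            exact hdbl _ _ hck
    calc ∫⁻ x in A k, f x ∂μ
        ≤ ENNReal.ofReal (((2:ℝ) ^ k * R) ^ (-α) * (lam w (2 ^ k * R))⁻¹) * μ (A k) :=
          step1
      _ ≤ ENNReal.ofReal (((2:ℝ) ^ k * R) ^ (-α) * (lam w (2 ^ k * R))⁻¹) *
            ENNReal.ofReal (Clam * lam w (2 ^ k * R)) := by
          exact mul_le_mul_right hμA _
      _ = ENNReal.ofReal ((((2:ℝ) ^ k * R) ^ (-α) * (lam w (2 ^ k * R))⁻¹) *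
            (Clam * lam w (2 ^ k * R))) := by
          rw [← ENNReal.ofReal_mul (by positivity)]
      _ = ENNReal.ofReal (Clam * ((2:ℝ) ^ k * R) ^ (-α)) := by
          congr 1
          field_simp
  -- geometric series
  have hterm : ∀ k : ℕ, Clam * ((2:ℝ) ^ k * R) ^ (-α)
      = (Clam * R ^ (-α)) * ((2:ℝ) ^ (-α)) ^ k := by
    intro k
    have h2k : ((2:ℝ) ^ k) ^ (-α) = ((2:ℝ) ^ (-α)) ^ k := by
      rw [← Real.rpow_natCast (2:ℝ) k, ← Real.rpow_natCast ((2:ℝ) ^ (-α)) k,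
        ← Real.rpow_mul (by norm_num), ← Real.rpow_mul (by norm_num)]
      ring_nf
    rw [Real.mul_rpow (by positivity) hR.le, h2k]
    ring
  have hsummable : Summable fun k : ℕ => (Clam * R ^ (-α)) * ((2:ℝ) ^ (-α)) ^ k :=
    (summable_geometric_of_lt_one hr0 hr1).mul_left _
  have htsum : ∑' k : ℕ, ENNReal.ofReal (Clam * ((2:ℝ) ^ k * R) ^ (-α))
      = ENNReal.ofReal ((Clam * R ^ (-α)) * (1 - (2:ℝ) ^ (-α))⁻¹) := by
    have : ∀ k : ℕ, ENNReal.ofReal (Clam * ((2:ℝ) ^ k * R) ^ (-α))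
        = ENNReal.ofReal ((Clam * R ^ (-α)) * ((2:ℝ) ^ (-α)) ^ k) := by
      intro k; rw [hterm k]
    rw [tsum_congr this, ← ENNReal.ofReal_tsum_of_nonneg
      (fun k => by positivity) hsummable, tsum_mul_left,
      tsum_geometric_of_lt_one hr0 hr1]
  -- combine integral bounds
  have hint : ∫⁻ x in Eᶜ, f x ∂μ ≤
      ENNReal.ofReal ((Clam * R ^ (-α)) * (1 - (2:ℝ) ^ (-α))⁻¹) := by
    calc ∫⁻ x in Eᶜ, f x ∂μ ≤ ∫⁻ x in ⋃ k, A k, f x ∂μ :=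
          lintegral_mono_set (hsub.trans hcover)
      _ ≤ ∑' k : ℕ, ∫⁻ x in A k, f x ∂μ := lintegral_iUnion_le _ _
      _ ≤ ∑' k : ℕ, ENNReal.ofReal (Clam * ((2:ℝ) ^ k * R) ^ (-α)) :=
          ENNReal.tsum_le_tsum hbound
      _ = _ := htsum
  -- final real inequality
  have hreal : ℓ ^ α * ((Clam * R ^ (-α)) * (1 - (2:ℝ) ^ (-α))⁻¹)
      ≤ Clam * c ^ (-α) / (1 - (2:ℝ) ^ (-α)) * (ℓ / L) ^ (α / 2) := by
    have hRle : R ^ (-α) ≤ (c * ℓ ^ ((1:ℝ)/2) * L ^ ((1:ℝ)/2)) ^ (-α) :=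
      Real.rpow_le_rpow_of_nonpos hgm hcR (by linarith)
    have hkey : ℓ ^ α * (c * ℓ ^ ((1:ℝ)/2) * L ^ ((1:ℝ)/2)) ^ (-α)
        = c ^ (-α) * (ℓ / L) ^ (α / 2) := by
      rw [Real.mul_rpow (by positivity) (by positivity),
        Real.mul_rpow (by positivity) (by positivity),
        ← Real.rpow_mul hℓ.le, ← Real.rpow_mul hL.le,
        Real.div_rpow hℓ.le hL.le]
      have h1 : ℓ ^ α * (c ^ (-α) * ℓ ^ ((1:ℝ)/2 * (-α)) * L ^ ((1:ℝ)/2 * (-α)))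
          = c ^ (-α) * ((ℓ ^ α * ℓ ^ ((1:ℝ)/2 * (-α))) * L ^ ((1:ℝ)/2 * (-α))) := by
        ring
      rw [h1, ← Real.rpow_add hℓ]
      have h2 : α + (1:ℝ)/2 * (-α) = α / 2 := by ring
      have h3 : (1:ℝ)/2 * (-α) = -(α/2) := by ring
      rw [h2, h3, Real.rpow_neg hL.le]
      ring
    calc ℓ ^ α * ((Clam * R ^ (-α)) * (1 - (2:ℝ) ^ (-α))⁻¹)
        ≤ ℓ ^ α * ((Clam * (c * ℓ ^ ((1:ℝ)/2) * L ^ ((1:ℝ)/2)) ^ (-α))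
            * (1 - (2:ℝ) ^ (-α))⁻¹) := by
          apply mul_le_mul_of_nonneg_left _ (Real.rpow_nonneg hℓ.le _)
          apply mul_le_mul_of_nonneg_right _ (by positivity)
          exact mul_le_mul_of_nonneg_left hRle (by linarith)
      _ = Clam * c ^ (-α) / (1 - (2:ℝ) ^ (-α)) * (ℓ / L) ^ (α / 2) := by
          rw [div_eq_mul_inv]
          calc ℓ ^ α * ((Clam * (c * ℓ ^ ((1:ℝ)/2) * L ^ ((1:ℝ)/2)) ^ (-α))
                * (1 - (2:ℝ) ^ (-α))⁻¹)
              = Clam * (ℓ ^ α * (c * ℓ ^ ((1:ℝ)/2) * L ^ ((1:ℝ)/2)) ^ (-α))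
                * (1 - (2:ℝ) ^ (-α))⁻¹ := by ring
            _ = _ := by rw [hkey]; ring
  calc ENNReal.ofReal (ℓ ^ α) * ∫⁻ x in Eᶜ, f x ∂μ
      ≤ ENNReal.ofReal (ℓ ^ α) *
        ENNReal.ofReal ((Clam * R ^ (-α)) * (1 - (2:ℝ) ^ (-α))⁻¹) :=
        mul_le_mul_right hint _
    _ = ENNReal.ofReal (ℓ ^ α * ((Clam * R ^ (-α)) * (1 - (2:ℝ) ^ (-α))⁻¹)) := by
        rw [← ENNReal.ofReal_mul (Real.rpow_nonneg hℓ.le _)]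
    _ ≤ ENNReal.ofReal (Clam * c ^ (-α) / (1 - (2:ℝ) ^ (-α)) * (ℓ / L) ^ (α / 2)) :=
        ENNReal.ofReal_le_ofReal hreal
end

section
/- Let (X,ρ) be a quasimetric space with an upper doubling Borel measure μ with dominating function λ and constant C_λ, and assume λ is symmetric: there is C₀ ≥ 1 with λ(x,r) ≤ C₀ λ(y,r) whenever ρ(x,y) ≤ r. Let C_Q ≥ 1, δ ∈ (0,1), r a positive integer, and ε ∈ (0,1). Let Q, Q' ⊆ X be measurable sets with points x*, y* ∈ X and numbers ℓ, ℓ' > 0 such that Q ⊆ B(x*, C_Q ℓ), Q' ⊆ B(y*, C_Q ℓ'), and δ^{r} ℓ' ≤ ℓ ≤ ℓ'. If x ∈ Q, y ∈ Q' and ρ(x,y) > ε ℓ, then λ(x, ρ(x,y)) ≥ c · μ(Q)^{1/2} μ(Q')^{1/2}, where c > 0 depends only on ε, δ^{r}, C_λ, C_Q and C₀. -/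
open MeasureTheory

set_option maxHeartbeats 1000000 in
/-- lower bound on the dominating function for points of adjacent
cubes that are strictly separated (Lemma 6.1 of the paper).  Here `κ` plays the
role of `δ ^ r`. -/
theorem surgery_lower_bound
    (ε κ Clam C_Q C₀ : ℝ)
    (hε0 : 0 < ε) (hε1 : ε < 1) (hκ0 : 0 < κ) (hκ1 : κ ≤ 1)
    (hClam : 1 ≤ Clam) (hC_Q : 1 ≤ C_Q) (hC₀ : 1 ≤ C₀) :
    ∃ c : ℝ, 0 < c ∧
      ∀ (X : Type) [MeasurableSpace X]
        (ρ : X → X → ℝ) (A₀ : ℝ) (μ : Measure X) (lam : X → ℝ → ℝ)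
        (Q Q' : Set X) (xstar ystar : X) (ℓ ℓ' : ℝ) (x y : X),
        1 ≤ A₀ →
        (∀ a b, 0 ≤ ρ a b) → (∀ a b, ρ a b = 0 ↔ a = b) →
        (∀ a b, ρ a b = ρ b a) → (∀ a b e, ρ a e ≤ A₀ * (ρ a b + ρ b e)) →
        (∀ a r, 0 < r → 0 < lam a r) →
        (∀ a r s, 0 < r → r ≤ s → lam a r ≤ lam a s) →
        (∀ a r, 0 < r → lam a (2 * r) ≤ Clam * lam a r) →
        (∀ a r, 0 < r → μ {b | ρ a b < r} ≤ ENNReal.ofReal (lam a r)) →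
        (∀ a b r, ρ a b ≤ r → lam a r ≤ C₀ * lam b r) →
        0 < ℓ → 0 < ℓ' →
        Q ⊆ {b | ρ xstar b < C_Q * ℓ} →
        Q' ⊆ {b | ρ ystar b < C_Q * ℓ'} →
        κ * ℓ' ≤ ℓ → ℓ ≤ ℓ' →
        x ∈ Q → y ∈ Q' → ε * ℓ < ρ x y →
        c * (μ Q).toReal ^ ((1 : ℝ) / 2) * (μ Q').toReal ^ ((1 : ℝ) / 2)
          ≤ lam x (ρ x y) := by
  obtain ⟨N, hN⟩ := pow_unbounded_of_one_lt (C_Q / ε) (by norm_num : (1:ℝ) < 2)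
  obtain ⟨M, hM⟩ := pow_unbounded_of_one_lt (C_Q / (ε * κ)) (by norm_num : (1:ℝ) < 2)
  set K : ℝ := C₀ ^ 3 * Clam ^ (N + M) with hKdef
  have hK1 : (1:ℝ) ≤ K := by
    have h1 : (1:ℝ) ≤ C₀ ^ 3 := one_le_pow₀ hC₀
    have h2 : (1:ℝ) ≤ Clam ^ (N + M) := one_le_pow₀ hClam
    calc (1:ℝ) = 1 * 1 := by ring
      _ ≤ C₀ ^ 3 * Clam ^ (N + M) := by gcongr <;> linarith
  have hK0 : (0:ℝ) < K := lt_of_lt_of_le one_pos hK1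
  refine ⟨K⁻¹, inv_pos.mpr hK0, ?_⟩
  intro X _ ρ A₀ μ lam Q Q' xstar ystar ℓ ℓ' x y hA₀ hρ0 hρeq hρsymm hρtri hlam0
    hlammono hlamdbl hμub hsym hℓ hℓ' hQ hQ' hκℓ hℓℓ' hx hy hsep
  -- iterated doubling
  have dbl : ∀ (a : X) (n : ℕ) (r s : ℝ), 0 < r → 0 < s → r ≤ 2 ^ n * s →
      lam a r ≤ Clam ^ n * lam a s := by
    intro a n
    induction n with
    | zero => intro r s hr hs h; simpa using hlammono a r s hr (by simpa using h)
    | succ n ih =>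
      intro r s hr hs h
      have h2s : (0:ℝ) < 2 * s := by linarith
      have h1 : lam a r ≤ Clam ^ n * lam a (2 * s) := by
        refine ih r (2 * s) hr h2s ?_
        calc r ≤ 2 ^ (n + 1) * s := h
          _ = 2 ^ n * (2 * s) := by ring
      have h2 : lam a (2 * s) ≤ Clam * lam a s := hlamdbl a s hs
      have hCn : (0:ℝ) ≤ Clam ^ n := pow_nonneg (by linarith) n
      calc lam a r ≤ Clam ^ n * (Clam * lam a s) :=
            h1.trans (mul_le_mul_of_nonneg_left h2 hCn)
        _ = Clam ^ (n + 1) * lam a s := by ring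
  have hεℓ : 0 < ε * ℓ := by positivity
  have hρxy : 0 < ρ x y := hεℓ.trans hsep
  set L := lam x (ρ x y) with hLdef
  have hL : 0 < L := hlam0 x _ hρxy
  have h2N : (0:ℝ) < 2 ^ N := by positivity
  have h2M : (0:ℝ) < 2 ^ M := by positivity
  have hN' : C_Q < 2 ^ N * ε := (div_lt_iff₀ hε0).mp hN
  have hM' : C_Q < 2 ^ M * (ε * κ) := (div_lt_iff₀ (by positivity)).mp hM
  -- bound for μ Q
  have hCQℓ : 0 < C_Q * ℓ := by positivity
  have hμQ : (μ Q).toReal ≤ lam xstar (C_Q * ℓ) := by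
    have h1 : μ Q ≤ ENNReal.ofReal (lam xstar (C_Q * ℓ)) :=
      (measure_mono hQ).trans (hμub xstar _ hCQℓ)
    exact ENNReal.toReal_le_of_le_ofReal (hlam0 xstar _ hCQℓ).le h1
  have hsymQ : lam xstar (C_Q * ℓ) ≤ C₀ * lam x (C_Q * ℓ) :=
    hsym xstar x _ (le_of_lt (hQ hx))
  have hdbQ : lam x (C_Q * ℓ) ≤ Clam ^ N * L := by
    refine dbl x N _ _ hCQℓ hρxy ?_
    have s1 : C_Q * ℓ ≤ (2 ^ N * ε) * ℓ := mul_le_mul_of_nonneg_right hN'.le hℓ.le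
    have s2 : 2 ^ N * (ε * ℓ) ≤ 2 ^ N * ρ x y := mul_le_mul_of_nonneg_left hsep.le h2N.le
    calc C_Q * ℓ ≤ (2 ^ N * ε) * ℓ := s1
      _ = 2 ^ N * (ε * ℓ) := by ring
      _ ≤ 2 ^ N * ρ x y := s2
  have hA : (μ Q).toReal ≤ (C₀ * Clam ^ N) * L := by
    have := hsymQ.trans (mul_le_mul_of_nonneg_left hdbQ (by linarith))
    calc (μ Q).toReal ≤ C₀ * (Clam ^ N * L) := hμQ.trans this
      _ = (C₀ * Clam ^ N) * L := by ring
  -- bound for μ Q'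
  have hCQℓ' : 0 < C_Q * ℓ' := by positivity
  have hμQ' : (μ Q').toReal ≤ lam ystar (C_Q * ℓ') := by
    have h1 : μ Q' ≤ ENNReal.ofReal (lam ystar (C_Q * ℓ')) :=
      (measure_mono hQ').trans (hμub ystar _ hCQℓ')
    exact ENNReal.toReal_le_of_le_ofReal (hlam0 ystar _ hCQℓ').le h1
  set R : ℝ := max (ρ x y) (C_Q * ℓ') with hRdef
  have hR0 : 0 < R := lt_of_lt_of_le hρxy (le_max_left _ _)
  have hsymQ' : lam ystar (C_Q * ℓ') ≤ C₀ * lam y (C_Q * ℓ') :=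
    hsym ystar y _ (le_of_lt (hQ' hy))
  have hmonoR : lam y (C_Q * ℓ') ≤ lam y R := hlammono y _ _ hCQℓ' (le_max_right _ _)
  have hsymR : lam y R ≤ C₀ * lam x R := by
    refine hsym y x R ?_
    rw [hρsymm y x]
    exact le_max_left _ _
  have hdbR : lam x R ≤ Clam ^ M * L := by
    refine dbl x M _ _ hR0 hρxy ?_
    have h1M : (1:ℝ) ≤ 2 ^ M := one_le_pow₀ (by norm_num)
    have h1 : ρ x y ≤ 2 ^ M * ρ x y := le_mul_of_one_le_left hρxy.le h1M
    have s1 : C_Q * ℓ' ≤ (2 ^ M * (ε * κ)) * ℓ' := mul_le_mul_of_nonneg_right hM'.le hℓ'.le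
    have s3 : (2 ^ M * ε) * (κ * ℓ') ≤ (2 ^ M * ε) * ℓ :=
      mul_le_mul_of_nonneg_left hκℓ (by positivity)
    have s4 : (2 ^ M * ε) * ℓ ≤ 2 ^ M * ρ x y := by
      have := mul_le_mul_of_nonneg_left hsep.le h2M.le
      calc (2 ^ M * ε) * ℓ = 2 ^ M * (ε * ℓ) := by ring
        _ ≤ 2 ^ M * ρ x y := this
    have h2 : C_Q * ℓ' ≤ 2 ^ M * ρ x y := by
      calc C_Q * ℓ' ≤ (2 ^ M * (ε * κ)) * ℓ' := s1
        _ = (2 ^ M * ε) * (κ * ℓ') := by ring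
        _ ≤ (2 ^ M * ε) * ℓ := s3
        _ ≤ 2 ^ M * ρ x y := s4
    exact max_le h1 h2
  have hB : (μ Q').toReal ≤ (C₀ ^ 2 * Clam ^ M) * L := by
    have hC₀0 : (0:ℝ) ≤ C₀ := by linarith
    calc (μ Q').toReal ≤ C₀ * lam y (C_Q * ℓ') := hμQ'.trans hsymQ'
      _ ≤ C₀ * lam y R := mul_le_mul_of_nonneg_left hmonoR hC₀0
      _ ≤ C₀ * (C₀ * lam x R) := mul_le_mul_of_nonneg_left hsymR hC₀0
      _ ≤ C₀ * (C₀ * (Clam ^ M * L)) := by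
          refine mul_le_mul_of_nonneg_left (mul_le_mul_of_nonneg_left hdbR hC₀0) hC₀0
      _ = (C₀ ^ 2 * Clam ^ M) * L := by ring
  -- combine
  set a := (μ Q).toReal with hadef
  set b := (μ Q').toReal with hbdef
  have ha0 : 0 ≤ a := ENNReal.toReal_nonneg
  have hb0 : 0 ≤ b := ENNReal.toReal_nonneg
  have hra : a ^ ((1:ℝ)/2) = Real.sqrt a := (Real.sqrt_eq_rpow a).symm
  have hrb : b ^ ((1:ℝ)/2) = Real.sqrt b := (Real.sqrt_eq_rpow b).symm
  rw [hra, hrb]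
  have hab : a * b ≤ K * L * L := by
    have hK1' : (0:ℝ) ≤ (C₀ * Clam ^ N) * L := by positivity
    calc a * b ≤ ((C₀ * Clam ^ N) * L) * ((C₀ ^ 2 * Clam ^ M) * L) := by
          apply mul_le_mul hA hB hb0 hK1'
      _ = K * L * L := by rw [hKdef]; ring
  have hsqrt : Real.sqrt a * Real.sqrt b ≤ Real.sqrt K * L := by
    rw [← Real.sqrt_mul ha0]
    calc Real.sqrt (a * b) ≤ Real.sqrt (K * L * L) := Real.sqrt_le_sqrt hab
      _ = Real.sqrt K * L := by
          rw [mul_assoc, Real.sqrt_mul hK0.le, Real.sqrt_mul_self hL.le]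
  have hsK : Real.sqrt K ≤ K := by
    nlinarith [Real.sq_sqrt hK0.le, Real.sqrt_nonneg K, Real.sqrt_le_sqrt hK1,
      Real.sqrt_one]
  calc K⁻¹ * Real.sqrt a * Real.sqrt b ≤ K⁻¹ * (Real.sqrt K * L) := by
        rw [mul_assoc]
        exact mul_le_mul_of_nonneg_left hsqrt (by positivity)
    _ ≤ K⁻¹ * (K * L) := by
        apply mul_le_mul_of_nonneg_left (mul_le_mul_of_nonneg_right hsK hL.le) (by positivity)
    _ = L := by field_simp
end

section
/- Let (X,ρ) be a quasimetric space with an upper doubling Borel measure μ with dominating function λ and constant C_λ, and assume λ is symmetric: there is C₀ ≥ 1 with λ(x,r) ≤ C₀ λ(y,r) whenever ρ(x,y) ≤ r. Let θ > 0, 0 < c ≤ C, and ε' ∈ (0,1). Let B = B(x_B, r_B) and B̂ = B(x̂, r̂) be balls with cθ ≤ r_B ≤ Cθ and cθ ≤ r̂ ≤ Cθ, and suppose ρ(B(x_B,(1+ε')r_B), B(x̂,(1+ε')r̂)) ≥ cθ. Then for all x ∈ B(x_B,(1+ε')r_B) and all y ∈ B(x̂,(1+ε')r̂), λ(x, ρ(x,y))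 ≥ c' · μ(B(x_B,(1+ε')r_B))^{1/2} μ(B(x̂,(1+ε')r̂))^{1/2}, where c' > 0 depends only on C_λ, C₀, c, C and ε'. -/
open MeasureTheory

lemma doubling_iter_s10 {Clam : ℝ} {X : Type} (lam : X → ℝ → ℝ)
    (hClam : 0 ≤ Clam)
    (hlamdoub : ∀ a r, 0 < r → lam a (2 * r) ≤ Clam * lam a r)
    (M : ℕ) (a : X) (r : ℝ) (hr : 0 < r) :
    lam a (2 ^ M * r) ≤ Clam ^ M * lam a r := by
  induction M with
  | zero => simp
  | succ n ih =>
    have h : (2 : ℝ) ^ (n + 1) * r = 2 * (2 ^ n * r) := by ring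
    rw [h, pow_succ]
    calc lam a (2 * (2 ^ n * r)) ≤ Clam * lam a (2 ^ n * r) :=
          hlamdoub a _ (by positivity)
      _ ≤ Clam * (Clam ^ n * lam a r) := mul_le_mul_of_nonneg_left ih hClam
      _ = Clam ^ n * Clam * lam a r := by ring

set_option maxHeartbeats 1000000 in
/-- lower bound on the dominating function for points of two
separated balls of a random almost-covering (Lemma 6.3 of the paper). -/
theorem covering_balls_lower_bound
    (Clam C₀ c C ε' : ℝ)
    (hClam : 1 ≤ Clam) (hC₀ : 1 ≤ C₀) (hc : 0 < c) (hcC : c ≤ C)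
    (hε'0 : 0 < ε') (hε'1 : ε' < 1) :
    ∃ c' : ℝ, 0 < c' ∧
      ∀ (X : Type) [MeasurableSpace X]
        (ρ : X → X → ℝ) (A₀ : ℝ) (μ : Measure X) (lam : X → ℝ → ℝ)
        (θ : ℝ) (xB xC : X) (rB rC : ℝ),
        1 ≤ A₀ →
        (∀ a b, 0 ≤ ρ a b) → (∀ a b, ρ a b = 0 ↔ a = b) →
        (∀ a b, ρ a b = ρ b a) → (∀ a b e, ρ a e ≤ A₀ * (ρ a b + ρ b e)) →
        (∀ a r, 0 < r → 0 < lam a r) →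
        (∀ a r s, 0 < r → r ≤ s → lam a r ≤ lam a s) →
        (∀ a r, 0 < r → lam a (2 * r) ≤ Clam * lam a r) →
        (∀ a r, 0 < r → μ {b | ρ a b < r} ≤ ENNReal.ofReal (lam a r)) →
        (∀ a b r, ρ a b ≤ r → lam a r ≤ C₀ * lam b r) →
        0 < θ →
        c * θ ≤ rB → rB ≤ C * θ →
        c * θ ≤ rC → rC ≤ C * θ →
        (∀ u ∈ {z | ρ xB z < (1 + ε') * rB}, ∀ v ∈ {z | ρ xC z < (1 + ε') * rC},
          c * θ ≤ ρ u v) →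
        ∀ x ∈ {z | ρ xB z < (1 + ε') * rB}, ∀ y ∈ {z | ρ xC z < (1 + ε') * rC},
          c' * (μ {z | ρ xB z < (1 + ε') * rB}).toReal ^ ((1 : ℝ) / 2)
              * (μ {z | ρ xC z < (1 + ε') * rC}).toReal ^ ((1 : ℝ) / 2)
            ≤ lam x (ρ x y) := by
  obtain ⟨M, hM⟩ := pow_unbounded_of_one_lt (2 * C / c) (by norm_num : (1 : ℝ) < 2)
  have hCpos : 0 < C := lt_of_lt_of_le hc hcC
  refine ⟨1 / (C₀ * Clam ^ M) ^ 2, by positivity, ?_⟩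
  intro X _ ρ A₀ μ lam θ xB xC rB rC hA₀ hρ0 hρeq hρsym hρtri hlam0 hlammono
    hlamdoub hμ hlamsym hθ hrB1 hrB2 hrC1 hrC2 hsep x hx y hy
  have hx' : ρ xB x < (1 + ε') * rB := hx
  have hy' : ρ xC y < (1 + ε') * rC := hy
  have hρxy : c * θ ≤ ρ x y := hsep x hx y hy
  have hρxy0 : 0 < ρ x y := lt_of_lt_of_le (by positivity) hρxy
  have hrB0 : 0 < rB := lt_of_lt_of_le (by positivity) hrB1
  have hrC0 : 0 < rC := lt_of_lt_of_le (by positivity) hrC1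
  set R := 2 ^ M * ρ x y with hR
  have h2M : 2 * C / c ≤ 2 ^ M := hM.le
  have h2M1 : (1 : ℝ) ≤ 2 ^ M := one_le_pow₀ (by norm_num : (1:ℝ) ≤ 2)
  have hρxyR : ρ x y ≤ R := le_mul_of_one_le_left hρxy0.le h2M1
  have hrBpos : 0 < (1 + ε') * rB := by positivity
  have hrCpos : 0 < (1 + ε') * rC := by positivity
  have key : ∀ r : ℝ, 0 < r → r ≤ C * θ → (1 + ε') * r ≤ R := by
    intro r hr0 hr
    have h1 : (1 + ε') * r ≤ 2 * (C * θ) := by nlinarith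
    have h2 : (2 * C / c) * (c * θ) = 2 * (C * θ) := by field_simp
    calc (1 + ε') * r ≤ (2 * C / c) * (c * θ) := by linarith
      _ ≤ 2 ^ M * ρ x y := mul_le_mul h2M hρxy (by positivity) (by positivity)
  have hrBR : (1 + ε') * rB ≤ R := key rB hrB0 hrB2
  have hrCR : (1 + ε') * rC ≤ R := key rC hrC0 hrC2
  set L := lam x (ρ x y) with hLdef
  have hL0 : 0 < L := hlam0 x _ hρxy0
  have hxR : lam x R ≤ Clam ^ M * L :=
    doubling_iter_s10 lam (by linarith) hlamdoub M x _ hρxy0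
  set K := C₀ * Clam ^ M with hKdef
  have hClamM : (1 : ℝ) ≤ Clam ^ M := one_le_pow₀ hClam
  have hClamM0 : (0 : ℝ) ≤ Clam ^ M := by linarith
  have hK1 : 1 ≤ K := by rw [hKdef]; nlinarith
  have hK0 : 0 < K := lt_of_lt_of_le one_pos hK1
  set a := (μ {z | ρ xB z < (1 + ε') * rB}).toReal with hadef
  set b := (μ {z | ρ xC z < (1 + ε') * rC}).toReal with hbdef
  have ha0 : 0 ≤ a := ENNReal.toReal_nonneg
  have hb0 : 0 ≤ b := ENNReal.toReal_nonneg
  have ha : a ≤ K * L := by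
    have h1 : a ≤ lam xB ((1 + ε') * rB) :=
      ENNReal.toReal_le_of_le_ofReal (hlam0 xB _ hrBpos).le (hμ xB _ hrBpos)
    calc a ≤ lam xB ((1 + ε') * rB) := h1
      _ ≤ lam xB R := hlammono xB _ _ hrBpos hrBR
      _ ≤ C₀ * lam x R := hlamsym xB x R (le_trans hx'.le hrBR)
      _ ≤ C₀ * (Clam ^ M * L) := mul_le_mul_of_nonneg_left hxR (by linarith)
      _ = K * L := by rw [hKdef]; ring
  have hb : b ≤ K ^ 2 * L := by
    have h1 : b ≤ lam xC ((1 + ε') * rC) :=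
      ENNReal.toReal_le_of_le_ofReal (hlam0 xC _ hrCpos).le (hμ xC _ hrCpos)
    have hyx : ρ y x ≤ R := by rw [hρsym y x]; exact hρxyR
    calc b ≤ lam xC ((1 + ε') * rC) := h1
      _ ≤ lam xC R := hlammono xC _ _ hrCpos hrCR
      _ ≤ C₀ * lam y R := hlamsym xC y R (le_trans hy'.le hrCR)
      _ ≤ C₀ * (C₀ * lam x R) :=
          mul_le_mul_of_nonneg_left (hlamsym y x R hyx) (by linarith)
      _ ≤ C₀ * (C₀ * (Clam ^ M * L)) := by
          have h3 := mul_le_mul_of_nonneg_left hxR (by linarith : (0:ℝ) ≤ C₀)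
          exact mul_le_mul_of_nonneg_left h3 (by linarith)
      _ ≤ K ^ 2 * L := by
          rw [hKdef]
          nlinarith [mul_nonneg (mul_nonneg (mul_nonneg (mul_nonneg
            (by linarith : (0:ℝ) ≤ C₀) (by linarith : (0:ℝ) ≤ C₀)) hClamM0)
            hL0.le) (by linarith : (0:ℝ) ≤ Clam ^ M - 1)]
  have hsq : a ^ ((1 : ℝ) / 2) = Real.sqrt a := (Real.sqrt_eq_rpow a).symm
  have hsqb : b ^ ((1 : ℝ) / 2) = Real.sqrt b := (Real.sqrt_eq_rpow b).symm
  rw [hsq, hsqb]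
  have hKL0 : (0:ℝ) ≤ K * L := mul_nonneg (by linarith) hL0.le
  have habL : a * b ≤ (K ^ 2 * L) ^ 2 := by
    nlinarith [mul_le_mul ha hb hb0 hKL0]
  have hab : Real.sqrt a * Real.sqrt b ≤ K ^ 2 * L := by
    rw [← Real.sqrt_mul ha0]
    calc Real.sqrt (a * b) ≤ Real.sqrt ((K ^ 2 * L) ^ 2) := Real.sqrt_le_sqrt habL
      _ = K ^ 2 * L := Real.sqrt_sq (mul_nonneg (sq_nonneg K) hL0.le)
  have hKne : K ^ 2 ≠ 0 := pow_ne_zero 2 hK0.ne'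
  calc 1 / K ^ 2 * Real.sqrt a * Real.sqrt b
      = 1 / K ^ 2 * (Real.sqrt a * Real.sqrt b) := by ring
    _ ≤ 1 / K ^ 2 * (K ^ 2 * L) :=
        mul_le_mul_of_nonneg_left hab (div_nonneg zero_le_one (sq_nonneg K))
    _ = L := by rw [one_div, inv_mul_cancel_left₀ hKne]
end

section
/- Let (X,ρ) be a quasimetric space (quasitriangle constant A₀ ≥ 1) with an upper doubling measure μ with dominating function λ and constant C_λ; set t := log₂ C_λ, let α > 0, γ := α/(2(α+t)), C_Q ≥ 1, C_K ≥ 1, 𝒞 := 2A₀C_QC_K, c > 0, A ≥ 0, C_h ≥ 0. Let K' : X × X → ℂ be measurable with |K'(x,y) − K'(x,w)| ≤ A ρ(y,w)^{α}/(ρ(x,w)^{α} λ(w,ρ(x,w))) whenever ρ(y,w) ≤ ρ(x,w)/C_K. Let Q ⊆ P ⊆ X be measurable sets, 0 < ℓ ≤ L, with ρ(y,w) ≤ C_Q ℓ for all y,w ∈ Q, and suppose R := ρ(Q, X∖P) satisfies R ≥ 𝒞 ℓ and R ≥ c ℓ^{1/2} L^{1/2}. Let h ∈ L²(μ) be supported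 in Q with ‖h‖_{L²(μ)} ≤ 1 and ∫ h dμ = 0, let m ∈ ℂ with |m| ≤ C_h μ(P)^{−1/2}, and assume the integrand below is absolutely integrable. Then |m| · |∫_{X∖P} ∫_{Q} K'(x,y) h(y) dμ(y) dμ(x)| ≤ C' · A · C_h · (ℓ/L)^{α/2} (μ(Q)/μ(P))^{1/2}, where C' depends only on C_λ, α, C_Q, C_K, A₀ and c. -/
/-!
Fix `w ∈ Q`. Because `h` has mean zero, the inner integral is
`∫_Q (K'(x,y) - K'(x,w)) h(y) dμ(y)`; for `x ∉ P` the point `x` is far from `Q` relative to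
its diameter, so the Hölder condition and Cauchy–Schwarz bound it by
`A (C_Q ℓ)^α μ(Q)^{1/2} / (ρ(x,w)^α λ(w, ρ(x,w)))`. Splitting `{ρ(x,w) ≥ R}` into dyadic
annuli, each annulus contributes at most `C_λ (2^k R)^{-α}` by upper doubling, so the outer
integral is `≲ R^{-α}`. Finally `R ≥ c (ℓ L)^{1/2}` turns `ℓ^α R^{-α}` into `(ℓ/L)^{α/2}`, and
`|m| ≤ C_h μ(P)^{-1/2}` supplies the remaining factor.
-/

open MeasureTheory
open scoped ENNReal

theorem two_rpow_neg_lt_one {α : ℝ} (hα : 0 < α) : (2 : ℝ) ^ (-α) < 1 :=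
  Real.rpow_lt_one_of_one_lt_of_neg one_lt_two (neg_lt_zero.2 hα)

theorem doubling_const_pos {V : ℝ → ℝ} {C : ℝ} (hV0 : ∀ r, 0 < r → 0 < V r)
    (hVdoub : ∀ r, 0 < r → V (2 * r) ≤ C * V r) : 0 < C :=
  pos_of_mul_pos_left ((hV0 _ two_pos).trans_le (by simpa using hVdoub 1 one_pos))
    (hV0 1 one_pos).le

theorem exists_dyadic_inv_rpow_mul_le {V : ℝ → ℝ} {α R t : ℝ} (hα : 0 ≤ α) (hR : 0 < R)
    (hRt : R ≤ t) (hV0 : ∀ r, 0 < r → 0 < V r) (hVmono : ∀ r s, 0 < r → r ≤ s → V r ≤ V s) :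
    ∃ k : ℕ, t < 2 ^ (k + 1) * R ∧ (t ^ α * V t)⁻¹ ≤ ((2 ^ k * R) ^ α * V (2 ^ k * R))⁻¹ := by
  obtain ⟨k, hk, hk'⟩ := exists_nat_pow_near ((one_le_div hR).2 hRt) one_lt_two
  rw [le_div_iff₀ hR] at hk
  rw [div_lt_iff₀ hR] at hk'
  have hkR : 0 < 2 ^ k * R := by positivity
  have hVk := hV0 _ hkR
  refine ⟨k, hk', inv_anti₀ (by positivity) ?_⟩
  exact mul_le_mul (Real.rpow_le_rpow hkR.le hk hα) (hVmono _ _ hkR hk) hVk.le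
    (Real.rpow_nonneg (hkR.le.trans hk) _)

theorem mul_rpow_mul_rpow_neg_le {C c ℓ L R α : ℝ} (hC : 0 ≤ C) (hc : 0 < c) (hℓ : 0 < ℓ)
    (hL : 0 < L) (hα : 0 ≤ α) (hR : c * ℓ ^ (1 / 2 : ℝ) * L ^ (1 / 2 : ℝ) ≤ R) :
    (C * ℓ) ^ α * R ^ (-α) ≤ C ^ α * c ^ (-α) * (ℓ / L) ^ (α / 2) := by
  have hℓα : ℓ ^ α = ℓ ^ (α / 2) * ℓ ^ (α / 2) := by rw [← Real.rpow_add hℓ, add_halves]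
  calc (C * ℓ) ^ α * R ^ (-α)
      ≤ (C * ℓ) ^ α * (c * ℓ ^ (1 / 2 : ℝ) * L ^ (1 / 2 : ℝ)) ^ (-α) :=
        mul_le_mul_of_nonneg_left
          (Real.rpow_le_rpow_of_nonpos (by positivity) hR (neg_nonpos.2 hα)) (by positivity)
    _ = C ^ α * c ^ (-α) * (ℓ / L) ^ (α / 2) := by
        rw [Real.mul_rpow hC hℓ.le, Real.mul_rpow (by positivity) (by positivity),
          Real.mul_rpow hc.le (by positivity), ← Real.rpow_mul hℓ.le, ← Real.rpow_mul hL.le,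
          show (1 / 2 : ℝ) * -α = -(α / 2) by ring, Real.rpow_neg hℓ.le, Real.rpow_neg hL.le,
          Real.div_rpow hℓ.le hL.le, hℓα]
        have : 0 < ℓ ^ (α / 2) := by positivity
        field_simp

theorem norm_kernel_sub_le_of_far {X : Type*} {ρ : X → X → ℝ} {lam : X → ℝ → ℝ}
    {K : X → X → ℂ} {A α C_K D : ℝ} {x y w : X}
    (hK : ∀ x y w, ρ y w ≤ ρ x w / C_K →
      ‖K x y - K x w‖ ≤ A * (ρ y w ^ α / (ρ x w ^ α * lam w (ρ x w))))
    (hA : 0 ≤ A) (hα : 0 ≤ α) (hC_K : 0 < C_K) (hlam : 0 ≤ lam w (ρ x w)) (hρ : 0 ≤ ρ y w)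
    (hyw : ρ y w ≤ D) (hxw : C_K * D ≤ ρ x w) :
    ‖K x y - K x w‖ ≤ A * (D ^ α / (ρ x w ^ α * lam w (ρ x w))) := by
  have hD : 0 ≤ D := hρ.trans hyw
  have hρx : 0 ≤ ρ x w := (by positivity : 0 ≤ C_K * D).trans hxw
  have hfar : ρ y w ≤ ρ x w / C_K :=
    (le_div_iff₀' hC_K).2 ((mul_le_mul_of_nonneg_left hyw hC_K.le).trans hxw)
  refine (hK x y w hfar).trans ?_
  gcongr

section

variable {X : Type*} [MeasurableSpace X] {μ : Measure X}

theorem setIntegral_norm_le_eLpNorm_two_mul_measure_rpow {E : Type*} [NormedAddCommGroup E]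
    {f : X → E} {s : Set X} (hf : MemLp f 2 μ) (hs : μ s ≠ ∞) :
    ∫ x in s, ‖f x‖ ∂μ ≤ (eLpNorm f 2 μ).toReal * (μ s).toReal ^ (1 / 2 : ℝ) := by
  have hfs : MemLp f 2 (μ.restrict s) := hf.restrict s
  have : IsFiniteMeasure (μ.restrict s) := isFiniteMeasure_restrict.2 hs
  have holder : ENNReal.ofReal (∫ x in s, ‖f x‖ ∂μ) ≤ eLpNorm f 2 μ * μ s ^ (1 / 2 : ℝ) := by
    rw [ofReal_integral_norm_eq_lintegral_enorm (hfs.integrable one_le_two),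
      ← eLpNorm_one_eq_lintegral_enorm]
    calc eLpNorm f 1 (μ.restrict s)
        ≤ eLpNorm f 2 (μ.restrict s) * μ.restrict s Set.univ ^ (1 / 1 - 1 / 2 : ℝ) := by
          simpa using eLpNorm_le_eLpNorm_mul_rpow_measure_univ one_le_two hfs.1
      _ ≤ eLpNorm f 2 μ * μ s ^ (1 / 2 : ℝ) := by
          rw [Measure.restrict_apply_univ, show (1 / 1 - 1 / 2 : ℝ) = 1 / 2 by norm_num]
          exact mul_le_mul_left (eLpNorm_mono_measure f Measure.restrict_le_self) _
  calc ∫ x in s, ‖f x‖ ∂μ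
      = (ENNReal.ofReal (∫ x in s, ‖f x‖ ∂μ)).toReal :=
        (ENNReal.toReal_ofReal (integral_nonneg fun _ => norm_nonneg _)).symm
    _ ≤ (eLpNorm f 2 μ * μ s ^ (1 / 2 : ℝ)).toReal :=
        ENNReal.toReal_mono (ENNReal.mul_ne_top hf.2.ne
          (ENNReal.rpow_ne_top_of_nonneg (by norm_num) hs)) holder
    _ = _ := by rw [ENNReal.toReal_mul, ENNReal.toReal_rpow]

theorem norm_setIntegral_mul_le_of_setIntegral_eq_zero {𝕜 : Type*} [RCLike 𝕜] {Q : Set X}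
    {k h : X → 𝕜} {w : X} {C : ℝ} (hQ : MeasurableSet Q) (hw : w ∈ Q)
    (hk : ∀ y ∈ Q, ‖k y - k w‖ ≤ C) (hh : IntegrableOn h Q μ) (hh0 : ∫ y in Q, h y ∂μ = 0) :
    ‖∫ y in Q, k y * h y ∂μ‖ ≤ C * ∫ y in Q, ‖h y‖ ∂μ := by
  have hC : 0 ≤ C := by simpa using hk w hw
  by_cases hkh : IntegrableOn (fun y => k y * h y) Q μ
  · have hcancel : ∫ y in Q, k y * h y ∂μ = ∫ y in Q, (k y - k w) * h y ∂μ := by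
      simp_rw [sub_mul]
      rw [integral_sub hkh (hh.const_mul _), integral_const_mul, hh0, mul_zero, sub_zero]
    rw [hcancel, ← integral_const_mul]
    refine norm_integral_le_of_norm_le (hh.norm.const_mul C) ?_
    filter_upwards [ae_restrict_mem hQ] with y hy
    rw [norm_mul]
    exact mul_le_mul_of_nonneg_right (hk y hy) (norm_nonneg _)
  · rw [integral_undef hkh, norm_zero]
    exact mul_nonneg hC (integral_nonneg fun _ => norm_nonneg _)

theorem norm_setIntegral_kernel_mul_le {ρ : X → X → ℝ} {lam : X → ℝ → ℝ} {K : X → X → ℂ}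
    {h : X → ℂ} {Q : Set X} {x w : X} {A α C_K D : ℝ}
    (hK : ∀ x y w, ρ y w ≤ ρ x w / C_K →
      ‖K x y - K x w‖ ≤ A * (ρ y w ^ α / (ρ x w ^ α * lam w (ρ x w))))
    (hA : 0 ≤ A) (hα : 0 ≤ α) (hC_K : 0 < C_K) (hlam : 0 ≤ lam w (ρ x w))
    (hρ : ∀ y, 0 ≤ ρ y w) (hQ : MeasurableSet Q) (hw : w ∈ Q) (hQD : ∀ y ∈ Q, ρ y w ≤ D)
    (hxD : C_K * D ≤ ρ x w) (hQfin : μ Q ≠ ∞) (hh : MemLp h 2 μ) (hh1 : eLpNorm h 2 μ ≤ 1)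
    (hh0 : ∫ y in Q, h y ∂μ = 0) :
    ‖∫ y in Q, K x y * h y ∂μ‖
      ≤ A * D ^ α * (μ Q).toReal ^ (1 / 2 : ℝ) * (ρ x w ^ α * lam w (ρ x w))⁻¹ := by
  have hD : 0 ≤ D := (hρ w).trans (hQD w hw)
  have hρx : 0 ≤ ρ x w := (by positivity : 0 ≤ C_K * D).trans hxD
  have hhQ : IntegrableOn h Q μ :=
    have := isFiniteMeasure_restrict.2 hQfin
    (hh.restrict Q).integrable one_le_two
  calc ‖∫ y in Q, K x y * h y ∂μ‖
      ≤ A * (D ^ α / (ρ x w ^ α * lam w (ρ x w))) * ∫ y in Q, ‖h y‖ ∂μ :=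
        norm_setIntegral_mul_le_of_setIntegral_eq_zero hQ hw (fun y hy =>
          norm_kernel_sub_le_of_far hK hA hα hC_K hlam (hρ y) (hQD y hy) hxD) hhQ hh0
    _ ≤ A * (D ^ α / (ρ x w ^ α * lam w (ρ x w))) * (μ Q).toReal ^ (1 / 2 : ℝ) := by
        gcongr
        refine (setIntegral_norm_le_eLpNorm_two_mul_measure_rpow hh hQfin).trans ?_
        exact mul_le_of_le_one_left (by positivity)
          (ENNReal.toReal_le_of_le_ofReal zero_le_one (by simpa using hh1))
    _ = A * D ^ α * (μ Q).toReal ^ (1 / 2 : ℝ) * (ρ x w ^ α * lam w (ρ x w))⁻¹ := by ring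

theorem setLIntegral_inv_rpow_mul_le_of_doubling {d : X → ℝ} {V : ℝ → ℝ} {S : Set X}
    {C α R : ℝ} (hα : 0 < α) (hR : 0 < R)
    (hV0 : ∀ r, 0 < r → 0 < V r) (hVmono : ∀ r s, 0 < r → r ≤ s → V r ≤ V s)
    (hVdoub : ∀ r, 0 < r → V (2 * r) ≤ C * V r)
    (hμ : ∀ r, 0 < r → μ {x | d x < r} ≤ ENNReal.ofReal (V r))
    (hS : MeasurableSet S) (hSR : ∀ x ∈ S, R ≤ d x) :
    ∫⁻ x in S, ENNReal.ofReal ((d x ^ α * V (d x))⁻¹) ∂μ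
      ≤ ENNReal.ofReal (C * (1 - 2 ^ (-α))⁻¹ * R ^ (-α)) := by
  have hC := (doubling_const_pos hV0 hVdoub).le
  -- `d` need not be measurable, so the balls are replaced by measurable hulls of equal measure
  let T : ℕ → Set X := fun k => toMeasurable μ {x | d x < 2 ^ (k + 1) * R}
  let u : ℕ → ℝ := fun k => ((2 ^ k * R) ^ α * V (2 ^ k * R))⁻¹
  have hcover : ∀ x ∈ S, ENNReal.ofReal ((d x ^ α * V (d x))⁻¹)
      ≤ ∑' k, (T k).indicator (fun _ => ENNReal.ofReal (u k)) x := by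
    intro x hx
    obtain ⟨k, hxk, hk⟩ := exists_dyadic_inv_rpow_mul_le hα.le hR (hSR x hx) hV0 hVmono
    calc ENNReal.ofReal ((d x ^ α * V (d x))⁻¹) ≤ ENNReal.ofReal (u k) :=
          ENNReal.ofReal_le_ofReal hk
      _ = (T k).indicator (fun _ => ENNReal.ofReal (u k)) x := by
          rw [Set.indicator_of_mem (subset_toMeasurable μ _ hxk)]
      _ ≤ _ := ENNReal.le_tsum k
  have hterm : ∀ k, ENNReal.ofReal (u k) * μ (T k)
      ≤ ENNReal.ofReal (C * R ^ (-α) * ((2 : ℝ) ^ (-α)) ^ k) := by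
    intro k
    have hkR : 0 < 2 ^ k * R := by positivity
    have hVk := hV0 _ hkR
    calc ENNReal.ofReal (u k) * μ (T k)
        ≤ ENNReal.ofReal (u k) * ENNReal.ofReal (C * V (2 ^ k * R)) := by
          rw [measure_toMeasurable, pow_succ, mul_comm _ (2 : ℝ), mul_assoc]
          gcongr
          exact (hμ _ (by positivity)).trans (ENNReal.ofReal_le_ofReal (hVdoub _ hkR))
      _ = ENNReal.ofReal (C * R ^ (-α) * ((2 : ℝ) ^ (-α)) ^ k) := by
          rw [← ENNReal.ofReal_mul (by positivity), Real.rpow_pow_comm zero_le_two, mul_assoc C,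
            ← Real.mul_rpow hR.le (by positivity), mul_comm R, Real.rpow_neg hkR.le]
          congr 1
          simp only [u]
          field_simp
  have hsum : HasSum (fun k : ℕ => C * R ^ (-α) * ((2 : ℝ) ^ (-α)) ^ k)
      (C * R ^ (-α) * (1 - 2 ^ (-α))⁻¹) :=
    (hasSum_geometric_of_lt_one (by positivity) (two_rpow_neg_lt_one hα)).mul_left _
  calc ∫⁻ x in S, ENNReal.ofReal ((d x ^ α * V (d x))⁻¹) ∂μ
      ≤ ∫⁻ x, ∑' k, (T k).indicator (fun _ => ENNReal.ofReal (u k)) x ∂μ :=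
        (setLIntegral_mono' hS hcover).trans (setLIntegral_le_lintegral _ _)
    _ = ∑' k, ENNReal.ofReal (u k) * μ (T k) := by
        rw [lintegral_tsum fun k =>
          (measurable_const.indicator (measurableSet_toMeasurable _ _)).aemeasurable]
        simp_rw [lintegral_indicator_const (measurableSet_toMeasurable _ _), T]
    _ ≤ ∑' k, ENNReal.ofReal (C * R ^ (-α) * ((2 : ℝ) ^ (-α)) ^ k) :=
        ENNReal.tsum_le_tsum hterm
    _ = ENNReal.ofReal (C * (1 - 2 ^ (-α))⁻¹ * R ^ (-α)) := by
        rw [← ENNReal.ofReal_tsum_of_nonneg (fun k => by positivity) hsum.summable,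
          hsum.tsum_eq, mul_right_comm]

theorem norm_setIntegral_le_of_le_inv_rpow_mul {E : Type*} [NormedAddCommGroup E]
    [NormedSpace ℝ E] {F : X → E} {d : X → ℝ} {V : ℝ → ℝ} {S : Set X} {C α R M : ℝ}
    (hα : 0 < α) (hR : 0 < R)
    (hV0 : ∀ r, 0 < r → 0 < V r) (hVmono : ∀ r s, 0 < r → r ≤ s → V r ≤ V s)
    (hVdoub : ∀ r, 0 < r → V (2 * r) ≤ C * V r)
    (hμ : ∀ r, 0 < r → μ {x | d x < r} ≤ ENNReal.ofReal (V r))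
    (hS : MeasurableSet S) (hSR : ∀ x ∈ S, R ≤ d x) (hM : 0 ≤ M)
    (hF : ∀ x ∈ S, ‖F x‖ ≤ M * (d x ^ α * V (d x))⁻¹) :
    ‖∫ x in S, F x ∂μ‖ ≤ M * (C * (1 - 2 ^ (-α))⁻¹ * R ^ (-α)) := by
  have hC := doubling_const_pos hV0 hVdoub
  have hgeom := sub_pos.2 (two_rpow_neg_lt_one hα)
  calc ‖∫ x in S, F x ∂μ‖
      ≤ (∫⁻ x in S, ENNReal.ofReal ‖F x‖ ∂μ).toReal := norm_integral_le_lintegral_norm _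
    _ ≤ (ENNReal.ofReal M * ENNReal.ofReal (C * (1 - 2 ^ (-α))⁻¹ * R ^ (-α))).toReal := by
        refine ENNReal.toReal_mono (by finiteness) ?_
        calc ∫⁻ x in S, ENNReal.ofReal ‖F x‖ ∂μ
            ≤ ∫⁻ x in S, ENNReal.ofReal M * ENNReal.ofReal ((d x ^ α * V (d x))⁻¹) ∂μ :=
              setLIntegral_mono' hS fun x hx => by
                rw [← ENNReal.ofReal_mul hM]
                exact ENNReal.ofReal_le_ofReal (hF x hx)
          _ ≤ _ := by
              rw [lintegral_const_mul' _ _ ENNReal.ofReal_ne_top]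
              gcongr
              exact setLIntegral_inv_rpow_mul_le_of_doubling hα hR hV0 hVmono hVdoub hμ hS hSR
    _ = _ := by rw [← ENNReal.ofReal_mul hM, ENNReal.toReal_ofReal (by positivity)]

end

/-- the Adjacent/Nested matrix-element estimate
(Lemma 7.1 of the paper). -/
theorem adjacent_nested_estimate
    (Clam α C_Q C_K A₀ c : ℝ)
    (hClam : 1 ≤ Clam) (hα : 0 < α) (hC_Q : 1 ≤ C_Q) (hC_K : 1 ≤ C_K)
    (hA₀ : 1 ≤ A₀) (hc : 0 < c) :
    ∃ C' : ℝ, 0 < C' ∧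
      ∀ (X : Type) [MeasurableSpace X]
        (ρ : X → X → ℝ) (μ : Measure X) (lam : X → ℝ → ℝ)
        (K' : X → X → ℂ) (Q P : Set X) (ℓ L R A C_h : ℝ) (h : X → ℂ) (m : ℂ),
        (∀ x y, 0 ≤ ρ x y) → (∀ x y, ρ x y = 0 ↔ x = y) →
        (∀ x y, ρ x y = ρ y x) → (∀ x y z, ρ x z ≤ A₀ * (ρ x y + ρ y z)) →
        (∀ x r, 0 < r → 0 < lam x r) →
        (∀ x r s, 0 < r → r ≤ s → lam x r ≤ lam x s) →
        (∀ x r, 0 < r → lam x (2 * r) ≤ Clam * lam x r) →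
        (∀ x r, 0 < r → μ {y | ρ x y < r} ≤ ENNReal.ofReal (lam x r)) →
        0 ≤ A → 0 ≤ C_h →
        (∀ x y w, ρ y w ≤ ρ x w / C_K →
          ‖K' x y - K' x w‖ ≤ A * (ρ y w ^ α / (ρ x w ^ α * lam w (ρ x w)))) →
        MeasurableSet Q → MeasurableSet P → Q ⊆ P →
        0 < ℓ → ℓ ≤ L →
        (∀ y ∈ Q, ∀ w ∈ Q, ρ y w ≤ C_Q * ℓ) →
        (∀ y ∈ Q, ∀ x ∈ Pᶜ, R ≤ ρ y x) →
        2 * A₀ * C_Q * C_K * ℓ ≤ R →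
        c * ℓ ^ ((1 : ℝ) / 2) * L ^ ((1 : ℝ) / 2) ≤ R →
        Function.support h ⊆ Q → MemLp h 2 μ → eLpNorm h 2 μ ≤ 1 →
        (∫ y, h y ∂μ) = 0 →
        ‖m‖ ≤ C_h * (μ P).toReal ^ (-(1 / 2) : ℝ) →
        Integrable (fun p : X × X => K' p.1 p.2 * h p.2)
          ((μ.restrict Pᶜ).prod (μ.restrict Q)) →
        ‖m‖ * ‖∫ x in Pᶜ, (∫ y in Q, K' x y * h y ∂μ) ∂μ‖
          ≤ C' * A * C_h * (ℓ / L) ^ (α / 2)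
              * ((μ Q).toReal / (μ P).toReal) ^ ((1 : ℝ) / 2) := by
  have hgeom := sub_pos.2 (two_rpow_neg_lt_one hα)
  refine ⟨C_Q ^ α * c ^ (-α) * (Clam * (1 - 2 ^ (-α))⁻¹), by positivity, ?_⟩
  intro X _ ρ μ lam K' Q P ℓ L R A C_h h m hρ0 _ hρsymm _ hlam0 hlammono hlamdoub hμball hA hCh
    hK hQ hP _ hℓ hℓL hdiam hsep hR hR' hsupp hmem hnorm hmean hm _
  rcases Q.eq_empty_or_nonempty with rfl | ⟨w, hw⟩
  · simp
  have hRpos : 0 < R := lt_of_lt_of_le (by positivity) hR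
  have hRK : C_K * (C_Q * ℓ) ≤ R :=
    le_trans (by nlinarith [mul_pos (mul_pos (by linarith : (0 : ℝ) < C_K)
      (by linarith : (0 : ℝ) < C_Q)) hℓ]) hR
  have hsep' : ∀ x ∈ Pᶜ, R ≤ ρ x w := fun x hx => hρsymm x w ▸ hsep w hw x hx
  have hμQ : μ Q ≠ ∞ := ne_top_of_le_ne_top ENNReal.ofReal_ne_top <|
    (measure_mono fun y hy => show ρ w y < 2 * (C_Q * ℓ) by nlinarith [hdiam w hw y hy]).trans
      (hμball w _ (by positivity))
  have hmeanQ : ∫ y in Q, h y ∂μ = 0 := by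
    rwa [setIntegral_eq_integral_of_forall_compl_eq_zero fun y hy =>
      Function.notMem_support.1 fun hy' => hy (hsupp hy')]
  have houter : ‖∫ x in Pᶜ, (∫ y in Q, K' x y * h y ∂μ) ∂μ‖
      ≤ A * (C_Q * ℓ) ^ α * (μ Q).toReal ^ (1 / 2 : ℝ) * (Clam * (1 - 2 ^ (-α))⁻¹ * R ^ (-α)) := by
    refine norm_setIntegral_le_of_le_inv_rpow_mul (d := fun x => ρ x w) hα hRpos (hlam0 w)
      (hlammono w) (hlamdoub w) (fun r hr => ?_) hP.compl hsep' (by positivity) fun x hx =>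
        norm_setIntegral_kernel_mul_le hK hA hα.le (by linarith)
          (hlam0 w _ (hRpos.trans_le (hsep' x hx))).le (fun y => hρ0 y w) hQ hw
          (fun y hy => hdiam y hy w hw) (hRK.trans (hsep' x hx)) hμQ hmem hnorm hmeanQ
    simpa only [hρsymm _ w] using hμball w r hr
  calc ‖m‖ * ‖∫ x in Pᶜ, (∫ y in Q, K' x y * h y ∂μ) ∂μ‖
      ≤ C_h * (μ P).toReal ^ (-(1 / 2) : ℝ) * (A * (C_Q * ℓ) ^ α * (μ Q).toReal ^ (1 / 2 : ℝ)
          * (Clam * (1 - 2 ^ (-α))⁻¹ * R ^ (-α))) :=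
        mul_le_mul hm houter (norm_nonneg _) (by positivity)
    _ = Clam * (1 - 2 ^ (-α))⁻¹ * A * C_h * ((C_Q * ℓ) ^ α * R ^ (-α))
          * ((μ Q).toReal / (μ P).toReal) ^ ((1 : ℝ) / 2) := by
        rw [Real.div_rpow ENNReal.toReal_nonneg ENNReal.toReal_nonneg,
          Real.rpow_neg ENNReal.toReal_nonneg]
        ring
    _ ≤ Clam * (1 - 2 ^ (-α))⁻¹ * A * C_h * (C_Q ^ α * c ^ (-α) * (ℓ / L) ^ (α / 2))
          * ((μ Q).toReal / (μ P).toReal) ^ ((1 : ℝ) / 2) := by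
        gcongr _ * ?_ * _
        exact mul_rpow_mul_rpow_neg_le (zero_le_one.trans hC_Q) hc hℓ (hℓ.trans_le hℓL) hα.le hR'
    _ = _ := by ring
end

section
/- Let (X, 𝔅) be a measurable space with a σ-finite measure μ, let H be a complex Hilbert space, and let j : X → H be strongly measurable. Say that μ is a Carleson measure for the Hilbert function space determined by j if there exists C ≥ 0 such that ∫_X |⟨f, j(x)⟩_H|² dμ(x) ≤ C² ‖f‖²_H for all f ∈ H. Then μ is a Carleson measure if and only if there exists C' ≥ 0 such that for every real-valued g ∈ L²(μ) with ∫_X |g(x)| ‖j(x)‖_H dμ(x) < ∞ one has |∬_{X×X} Re⟨j(x), j(z)⟩_H · g(x) g(z) dμ(x) dμ(z)| ≤ C' ‖g‖²_{L²(μ)}. Moreover the constants can be taken comparable: one may take C' = C², and conversely C² ≤ 2C'. -/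
/-!
Write `v_g = ∫ g • j dμ`. Moving the inner products inside the integrals turns the quadratic
form into `‖v_g‖²`, and `∫ g · Re⟨f, j⟩ dμ = Re⟨f, v_g⟩`, so the two conditions are dual to each
other. If `μ` is Carleson with constant `C`, then `‖v_g‖² = ∫ g · Re⟨v_g, j⟩ dμ ≤ ‖g‖₂ · C ‖v_g‖`
by Cauchy–Schwarz in `L²(μ)`. Conversely, testing the bound on `g = 1_s · Re⟨f, j⟩` gives
`‖g‖₂² = Re⟨f, v_g⟩ ≤ ‖f‖ √C' ‖g‖₂`, hence `∫_s (Re⟨f, j⟩)² dμ ≤ C' ‖f‖²`. Such a `g` is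
admissible when `s` has finite measure and `j` is bounded on `s`, and by σ-finiteness these sets
exhaust `X`. The imaginary part is the real part for `I • f`, which costs the factor `2`.
-/

open MeasureTheory
open scoped ENNReal

theorem Complex.enorm_sq_eq_enorm_re_sq_add_enorm_im_sq (z : ℂ) :
    ‖z‖ₑ ^ 2 = ‖z.re‖ₑ ^ 2 + ‖z.im‖ₑ ^ 2 := by
  simp only [← ofReal_norm, ← ENNReal.ofReal_pow (norm_nonneg _)]
  rw [← ENNReal.ofReal_add (by positivity) (by positivity), Complex.sq_norm, Complex.normSq_apply,
    Real.norm_eq_abs, Real.norm_eq_abs, sq_abs, sq_abs, sq, sq]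

theorem MeasureTheory.StronglyMeasurable.re_const_inner {X : Type*} [MeasurableSpace X]
    {H : Type*} [NormedAddCommGroup H] [InnerProductSpace ℂ H] {j : X → H}
    (hj : StronglyMeasurable j) (f : H) :
    StronglyMeasurable fun x => (inner ℂ f (j x) : ℂ).re :=
  Complex.continuous_re.comp_stronglyMeasurable (stronglyMeasurable_const.inner hj)

section LTwo

variable {X : Type*} [MeasurableSpace X] {μ : Measure X}

theorem eLpNorm_two_sq_eq_lintegral {E : Type*} [NormedAddCommGroup E] (f : X → E) :
    eLpNorm f 2 μ ^ 2 = ∫⁻ x, ‖f x‖ₑ ^ 2 ∂μ := by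
  simpa using eLpNorm_nnreal_pow_eq_lintegral (μ := μ) (f := f) (p := 2) two_ne_zero

theorem toReal_eLpNorm_two_sq_eq_integral {g : X → ℝ} (hg : AEStronglyMeasurable g μ) :
    (eLpNorm g 2 μ).toReal ^ 2 = ∫ x, g x ^ 2 ∂μ := by
  rw [← ENNReal.toReal_pow, eLpNorm_two_sq_eq_lintegral, integral_eq_lintegral_of_nonneg_ae
    (.of_forall fun x => sq_nonneg _) (hg.pow 2)]
  congr 1
  refine lintegral_congr fun x => ?_
  rw [← ofReal_norm, ← ENNReal.ofReal_pow (norm_nonneg _), Real.norm_eq_abs, sq_abs]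

theorem integral_mul_le_toReal_eLpNorm_mul {f g : X → ℝ} (hf : MemLp f 2 μ) (hg : MemLp g 2 μ) :
    ∫ x, f x * g x ∂μ ≤ (eLpNorm f 2 μ).toReal * (eLpNorm g 2 μ).toReal := by
  have h := real_inner_le_norm (hf.toLp f) (hg.toLp g)
  rw [L2.inner_def, Lp.norm_toLp, Lp.norm_toLp] at h
  refine le_of_eq_of_le (integral_congr_ae ?_) h
  filter_upwards [hf.coeFn_toLp, hg.coeFn_toLp] with x hfx hgx
  simp [hfx, hgx, mul_comm]

theorem lintegral_le_of_forall_setLIntegral_le [SigmaFinite μ] {h : X → ℝ} (hh : Measurable h)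
    (F : X → ℝ≥0∞) {B : ℝ≥0∞}
    (hF : ∀ s, MeasurableSet s → μ s < ∞ → ∀ R : ℝ, (∀ x ∈ s, h x ≤ R) →
      ∫⁻ x in s, F x ∂μ ≤ B) :
    ∫⁻ x, F x ∂μ ≤ B := by
  set s : ℕ → Set X := fun n => spanningSets μ n ∩ {x | h x ≤ n}
  have hmono : Monotone s := fun m n hmn =>
    Set.inter_subset_inter (monotone_spanningSets μ hmn)
      fun x (hx : h x ≤ m) => hx.trans (Nat.cast_le.mpr hmn)
  have hunion : ⋃ n, s n = Set.univ := by
    refine Set.eq_univ_of_forall fun x => ?_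
    obtain ⟨m, hm⟩ := Set.mem_iUnion.mp (iUnion_spanningSets μ ▸ Set.mem_univ x)
    refine Set.mem_iUnion.mpr ⟨max m ⌈h x⌉₊, ?_⟩
    exact ⟨monotone_spanningSets μ (le_max_left _ _) hm,
      (Nat.le_ceil (h x)).trans (Nat.cast_le.mpr (le_max_right _ _))⟩
  rw [← setLIntegral_univ, ← hunion, setLIntegral_iUnion_of_directed F hmono.directed_le]
  exact iSup_le fun n =>
    hF _ ((measurableSet_spanningSets μ n).inter (measurableSet_le hh measurable_const))
      ((measure_mono Set.inter_subset_left).trans_lt (measure_spanningSets_lt_top μ n)) n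
      fun x hx => hx.2

theorem integrable_smul_of_integrable_abs_mul_norm {E : Type*} [NormedAddCommGroup E]
    [NormedSpace ℝ E] {j : X → E} {g : X → ℝ} (hj : AEStronglyMeasurable j μ)
    (hg : AEStronglyMeasurable g μ) (hgj : Integrable (fun x => |g x| * ‖j x‖) μ) :
    Integrable (fun x => g x • j x) μ := by
  refine (integrable_norm_iff (hg.smul hj)).mp ?_
  simpa only [Pi.smul_apply', norm_smul, Real.norm_eq_abs] using hgj

theorem memLp_indicator_of_forall_norm_le {E : Type*} [NormedAddCommGroup E] {φ : X → E}
    {s : Set X} (hs : MeasurableSet s) (hμs : μ s < ∞) (hφ : AEStronglyMeasurable φ μ) {M : ℝ}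
    (hM : ∀ x ∈ s, ‖φ x‖ ≤ M) (p : ℝ≥0∞) :
    MemLp (s.indicator φ) p μ :=
  have : IsFiniteMeasure (μ.restrict s) := isFiniteMeasure_restrict.mpr hμs.ne
  (memLp_indicator_iff_restrict hs).mpr <|
    .of_bound hφ.restrict M ((ae_restrict_iff' hs).mpr (.of_forall hM))

theorem integrable_abs_indicator_mul_norm_of_forall_le {E : Type*} [NormedAddCommGroup E]
    {j : X → E} (hj : AEStronglyMeasurable j μ) {s : Set X} (hs : MeasurableSet s) (hμs : μ s < ∞)
    {φ : X → ℝ} (hφ : AEStronglyMeasurable φ μ) {M R : ℝ} (hM : ∀ x ∈ s, ‖φ x‖ ≤ M)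
    (hR : ∀ x ∈ s, ‖j x‖ ≤ R) :
    Integrable (fun x => |s.indicator φ x| * ‖j x‖) μ := by
  have hind : (fun x => |s.indicator φ x| * ‖j x‖) = s.indicator fun x => ‖φ x‖ * ‖j x‖ := by
    ext x
    by_cases hx : x ∈ s <;> simp [hx]
  rw [hind, ← memLp_one_iff_integrable]
  refine memLp_indicator_of_forall_norm_le (φ := fun x => ‖φ x‖ * ‖j x‖) hs hμs
    (hφ.norm.mul hj.norm) (M := M * R) (fun x hx => ?_) 1
  rw [norm_mul, norm_norm, norm_norm]
  exact mul_le_mul (hM x hx) (hR x hx) (norm_nonneg _) ((norm_nonneg _).trans (hM x hx))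

end LTwo

section Kernel

variable {X : Type*} [MeasurableSpace X] {μ : Measure X}
  {H : Type*} [NormedAddCommGroup H] [InnerProductSpace ℂ H] [CompleteSpace H]
  {j : X → H} {g : X → ℝ}

theorem integral_mul_re_inner_eq (hj : StronglyMeasurable j) (hg : AEStronglyMeasurable g μ)
    (hgj : Integrable (fun x => |g x| * ‖j x‖) μ) (f : H) :
    ∫ x, g x * (inner ℂ f (j x) : ℂ).re ∂μ = (inner ℂ f (∫ x, g x • j x ∂μ) : ℂ).re := by
  have hint := integrable_smul_of_integrable_abs_mul_norm hj.aestronglyMeasurable hg hgj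
  rw [← integral_inner hint, ← RCLike.re_to_complex, ← integral_re (hint.const_inner f)]
  refine integral_congr_ae (.of_forall fun x => ?_)
  dsimp only
  rw [RCLike.real_smul_eq_coe_smul (K := ℂ), inner_smul_right]
  simp

theorem integral_integral_re_inner_mul_mul_eq_norm_sq (hj : StronglyMeasurable j)
    (hg : AEStronglyMeasurable g μ) (hgj : Integrable (fun x => |g x| * ‖j x‖) μ) :
    ∫ x, (∫ z, (inner ℂ (j x) (j z) : ℂ).re * g x * g z ∂μ) ∂μ
      = ‖∫ x, g x • j x ∂μ‖ ^ 2 := by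
  set v := ∫ x, g x • j x ∂μ
  have hinner : ∀ x, ∫ z, (inner ℂ (j x) (j z) : ℂ).re * g x * g z ∂μ
      = g x * (inner ℂ v (j x) : ℂ).re := fun x => by
    calc ∫ z, (inner ℂ (j x) (j z) : ℂ).re * g x * g z ∂μ
        = g x * ∫ z, g z * (inner ℂ (j x) (j z) : ℂ).re ∂μ := by
          rw [← integral_const_mul]
          exact integral_congr_ae (.of_forall fun z => by ring)
      _ = g x * (inner ℂ v (j x) : ℂ).re := by
          rw [integral_mul_re_inner_eq hj hg hgj, ← RCLike.re_to_complex, inner_re_symm]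
          rfl
  rw [integral_congr_ae (.of_forall hinner), integral_mul_re_inner_eq hj hg hgj,
    ← RCLike.re_to_complex, inner_self_eq_norm_sq]

theorem norm_integral_smul_le_of_carleson (hj : StronglyMeasurable j) {C : ℝ} (hC : 0 ≤ C)
    (hcarl : ∀ f : H, ∫⁻ x, (‖(inner ℂ f (j x) : ℂ)‖₊ : ℝ≥0∞) ^ 2 ∂μ
      ≤ ENNReal.ofReal (C ^ 2 * ‖f‖ ^ 2))
    (hg : MemLp g 2 μ) (hgj : Integrable (fun x => |g x| * ‖j x‖) μ) :
    ‖∫ x, g x • j x ∂μ‖ ≤ C * (eLpNorm g 2 μ).toReal := by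
  set v := ∫ x, g x • j x ∂μ
  set w : X → ℝ := fun x => (inner ℂ v (j x) : ℂ).re
  have hw : eLpNorm w 2 μ ≤ ENNReal.ofReal (C * ‖v‖) := by
    refine (eLpNorm_mono (g := fun x => (inner ℂ v (j x) : ℂ))
      fun x => (Real.norm_eq_abs _).trans_le (Complex.abs_re_le_norm _)).trans ?_
    rw [← ENNReal.pow_le_pow_left_iff two_ne_zero, eLpNorm_two_sq_eq_lintegral,
      ← ENNReal.ofReal_pow (by positivity), mul_pow]
    simpa only [enorm_eq_nnnorm] using hcarl v
  have hwL2 : MemLp w 2 μ :=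
    ⟨(hj.re_const_inner v).aestronglyMeasurable, hw.trans_lt ENNReal.ofReal_lt_top⟩
  have hsq : ‖v‖ ^ 2 ≤ (C * (eLpNorm g 2 μ).toReal) * ‖v‖ := calc
    ‖v‖ ^ 2 = ∫ x, g x * w x ∂μ := by
      rw [integral_mul_re_inner_eq hj hg.1 hgj, ← RCLike.re_to_complex, inner_self_eq_norm_sq]
    _ ≤ (eLpNorm g 2 μ).toReal * (eLpNorm w 2 μ).toReal :=
      integral_mul_le_toReal_eLpNorm_mul hg hwL2
    _ ≤ (eLpNorm g 2 μ).toReal * (C * ‖v‖) := by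
      gcongr
      exact ENNReal.toReal_le_of_le_ofReal (by positivity) hw
    _ = (C * (eLpNorm g 2 μ).toReal) * ‖v‖ := by ring
  nlinarith [norm_nonneg v, mul_nonneg hC (ENNReal.toReal_nonneg (a := eLpNorm g 2 μ))]

variable {C' : ℝ}
  (hbd : ∀ g : X → ℝ, MemLp g 2 μ → Integrable (fun x => |g x| * ‖j x‖) μ →
    |∫ x, (∫ z, (inner ℂ (j x) (j z) : ℂ).re * g x * g z ∂μ) ∂μ|
      ≤ C' * ((eLpNorm g 2 μ).toReal) ^ 2)
include hbd

theorem sq_integral_mul_re_inner_le_of_bilinear_bound (hj : StronglyMeasurable j)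
    (hg : MemLp g 2 μ) (hgj : Integrable (fun x => |g x| * ‖j x‖) μ) (f : H) :
    (∫ x, g x * (inner ℂ f (j x) : ℂ).re ∂μ) ^ 2
      ≤ C' * ‖f‖ ^ 2 * (eLpNorm g 2 μ).toReal ^ 2 := by
  set v := ∫ x, g x • j x ∂μ
  have hv : ‖v‖ ^ 2 ≤ C' * (eLpNorm g 2 μ).toReal ^ 2 := by
    simpa only [integral_integral_re_inner_mul_mul_eq_norm_sq hj hg.1 hgj, abs_sq]
      using hbd g hg hgj
  calc (∫ x, g x * (inner ℂ f (j x) : ℂ).re ∂μ) ^ 2 = (inner ℂ f v : ℂ).re ^ 2 := by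
        rw [integral_mul_re_inner_eq hj hg.1 hgj]
    _ ≤ (‖f‖ * ‖v‖) ^ 2 := by
        rw [← sq_abs, ← RCLike.re_to_complex]
        gcongr
        exact (RCLike.abs_re_le_norm _).trans (norm_inner_le_norm f v)
    _ ≤ C' * ‖f‖ ^ 2 * (eLpNorm g 2 μ).toReal ^ 2 := by
        rw [mul_pow, mul_comm C', mul_assoc]
        gcongr

theorem setLIntegral_enorm_re_inner_sq_le_of_bilinear_bound (hj : StronglyMeasurable j)
    (hC' : 0 ≤ C') (f : H) {s : Set X} (hs : MeasurableSet s) (hμs : μ s < ∞) {R : ℝ}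
    (hR : ∀ x ∈ s, ‖j x‖ ≤ R) :
    ∫⁻ x in s, ‖(inner ℂ f (j x) : ℂ).re‖ₑ ^ 2 ∂μ ≤ ENNReal.ofReal (C' * ‖f‖ ^ 2) := by
  set φ : X → ℝ := fun x => (inner ℂ f (j x) : ℂ).re
  have hφm : AEStronglyMeasurable φ μ := (hj.re_const_inner f).aestronglyMeasurable
  have hφs : ∀ x ∈ s, ‖φ x‖ ≤ ‖f‖ * R := fun x hx =>
    ((Real.norm_eq_abs _).trans_le (Complex.abs_re_le_norm _)).trans
      ((norm_inner_le_norm _ _).trans (mul_le_mul_of_nonneg_left (hR x hx) (norm_nonneg f)))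
  set g := s.indicator φ
  have hg : MemLp g 2 μ :=
    memLp_indicator_of_forall_norm_le hs hμs hφm hφs 2
  have hgj : Integrable (fun x => |g x| * ‖j x‖) μ :=
    integrable_abs_indicator_mul_norm_of_forall_le hj.aestronglyMeasurable hs hμs hφm hφs hR
  set N := (eLpNorm g 2 μ).toReal
  have hN : N ^ 2 = ∫ x, g x * φ x ∂μ := by
    rw [toReal_eLpNorm_two_sq_eq_integral hg.1]
    refine integral_congr_ae (.of_forall fun x => ?_)
    by_cases hx : x ∈ s <;> simp [g, hx, sq]
  have hN4 : (N ^ 2) ^ 2 ≤ C' * ‖f‖ ^ 2 * N ^ 2 :=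
    (congrArg (· ^ 2) hN).trans_le (sq_integral_mul_re_inner_le_of_bilinear_bound hbd hj hg hgj f)
  have hN2 : N ^ 2 ≤ C' * ‖f‖ ^ 2 := by
    nlinarith [sq_nonneg N, mul_nonneg hC' (sq_nonneg ‖f‖)]
  calc ∫⁻ x in s, ‖φ x‖ₑ ^ 2 ∂μ = eLpNorm g 2 μ ^ 2 := by
        rw [eLpNorm_indicator_eq_eLpNorm_restrict hs, eLpNorm_two_sq_eq_lintegral]
    _ = ENNReal.ofReal (N ^ 2) := by
        rw [ENNReal.ofReal_pow ENNReal.toReal_nonneg, ENNReal.ofReal_toReal hg.2.ne]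
    _ ≤ ENNReal.ofReal (C' * ‖f‖ ^ 2) := ENNReal.ofReal_le_ofReal hN2

theorem lintegral_enorm_re_inner_sq_le_of_bilinear_bound [SigmaFinite μ]
    (hj : StronglyMeasurable j) (hC' : 0 ≤ C') (f : H) :
    ∫⁻ x, ‖(inner ℂ f (j x) : ℂ).re‖ₑ ^ 2 ∂μ ≤ ENNReal.ofReal (C' * ‖f‖ ^ 2) :=
  lintegral_le_of_forall_setLIntegral_le hj.norm.measurable _ fun _s hs hμs _R hR =>
    setLIntegral_enorm_re_inner_sq_le_of_bilinear_bound hbd hj hC' f hs hμs hR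

theorem lintegral_nnnorm_inner_sq_le_of_bilinear_bound [SigmaFinite μ]
    (hj : StronglyMeasurable j) (hC' : 0 ≤ C') (f : H) :
    ∫⁻ x, (‖(inner ℂ f (j x) : ℂ)‖₊ : ℝ≥0∞) ^ 2 ∂μ ≤ ENNReal.ofReal (2 * C' * ‖f‖ ^ 2) := by
  have hsplit : ∀ x, (‖(inner ℂ f (j x) : ℂ)‖₊ : ℝ≥0∞) ^ 2 =
      ‖(inner ℂ f (j x) : ℂ).re‖ₑ ^ 2 + ‖(inner ℂ (Complex.I • f) (j x) : ℂ).re‖ₑ ^ 2 := by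
    intro x
    rw [inner_smul_left, ← enorm_eq_nnnorm, Complex.enorm_sq_eq_enorm_re_sq_add_enorm_im_sq]
    simp
  have hre : Measurable fun x => ‖(inner ℂ f (j x) : ℂ).re‖ₑ ^ 2 :=
    (hj.re_const_inner f).measurable.enorm.pow_const 2
  rw [lintegral_congr hsplit, lintegral_add_left hre, two_mul, add_mul,
    ENNReal.ofReal_add (by positivity) (by positivity)]
  gcongr
  · exact lintegral_enorm_re_inner_sq_le_of_bilinear_bound hbd hj hC' f
  · simpa only [norm_smul, Complex.norm_I, one_mul]
      using lintegral_enorm_re_inner_sq_le_of_bilinear_bound hbd hj hC' (Complex.I • f)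

end Kernel

/-- a measure is Carleson for a reproducing kernel Hilbert space
if and only if the quadratic form of the real part of the kernel is bounded on
L²(μ), with comparable constants (Proposition 9.1 of the paper). -/
theorem carleson_iff_bilinear_bound
    {X : Type*} [MeasurableSpace X] (μ : Measure X) [SigmaFinite μ]
    {H : Type*} [NormedAddCommGroup H] [InnerProductSpace ℂ H] [CompleteSpace H]
    (j : X → H) (hj : StronglyMeasurable j) :
    (∀ C : ℝ, 0 ≤ C →
      (∀ f : H, ∫⁻ x, (‖(inner ℂ f (j x) : ℂ)‖₊ : ℝ≥0∞) ^ 2 ∂μ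
          ≤ ENNReal.ofReal (C ^ 2 * ‖f‖ ^ 2)) →
      ∀ g : X → ℝ, MemLp g 2 μ →
        Integrable (fun x => |g x| * ‖j x‖) μ →
        |∫ x, (∫ z, (inner ℂ (j x) (j z) : ℂ).re * g x * g z ∂μ) ∂μ|
          ≤ C ^ 2 * ((eLpNorm g 2 μ).toReal) ^ 2) ∧
    (∀ C' : ℝ, 0 ≤ C' →
      (∀ g : X → ℝ, MemLp g 2 μ →
        Integrable (fun x => |g x| * ‖j x‖) μ →
        |∫ x, (∫ z, (inner ℂ (j x) (j z) : ℂ).re * g x * g z ∂μ) ∂μ|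
          ≤ C' * ((eLpNorm g 2 μ).toReal) ^ 2) →
      ∀ f : H, ∫⁻ x, (‖(inner ℂ f (j x) : ℂ)‖₊ : ℝ≥0∞) ^ 2 ∂μ
          ≤ ENNReal.ofReal (2 * C' * ‖f‖ ^ 2)) := by
  refine ⟨fun C hC hcarl g hg hgj => ?_, fun C' hC' hbd f =>
    lintegral_nnnorm_inner_sq_le_of_bilinear_bound hbd hj hC' f⟩
  rw [integral_integral_re_inner_mul_mul_eq_norm_sq hj hg.1 hgj, abs_sq, ← mul_pow]
  exact pow_le_pow_left₀ (norm_nonneg _) (norm_integral_smul_le_of_carleson hj hC hcarl hg hgj) 2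
end

section
/- Let (X,ρ) be a quasimetric space with an upper doubling measure μ with dominating function λ and constant C_λ (t := log₂ C_λ), and assume λ is symmetric: there is C₀ ≥ 1 with λ(x,r) ≤ C₀ λ(y,r) whenever ρ(x,y) ≤ r. Let α > 0, γ := α/(2(α+t)), C_Q ≥ 1, c > 0. Let 0 < ℓ ≤ L, let w, z' ∈ X with ρ(z',w) ≤ C_Q L, and let Q', S ⊆ X be measurable sets with Q' ⊆ B(z', C_Q L) and μ(S) ≤ μ(B(z', C_Q L)). Suppose ρ(x,w) ≥ c ℓ^{γ} L^{1−γ} for every x ∈ Q'. Then for every h ∈ L²(μ) with ‖h‖_{L²(μ)} ≤ 1, ∫_{Q'} ℓ^{α} ρ(x,w)^{−α} λ(w, ρ(x,w))^{−1} |h(x)| dμ(x) ≤ C' (ℓ/L)^{α/2} μ(S)^{−1/2}, where C' depends only on C_λ, C₀, C_Q, α and c. -/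
/-!
On `Q'` goodness gives `ρ(x, w) ≥ r₀ := c ℓ^γ L^(1-γ)`, so the kernel is at most
`ℓ^α r₀^(-α) / λ(w, r₀)` there, and Cauchy–Schwarz bounds `∫_{Q'} |h|` by
`μ(Q')^(1/2) ≤ μ(B)^(1/2) ≤ μ(B) μ(S)^(-1/2)` with `B = B(z', C_Q L)`. Symmetry and the upper
doubling bound give `μ(B) ≤ λ(z', C_Q L) ≤ C₀ λ(w, C_Q L)`; since `C_Q L / r₀ ≲ (L/ℓ)^γ`,
reaching `C_Q L` from `r₀` takes about `log₂ (L/ℓ)^γ` doublings, which cost `(L/ℓ)^(γ t)`.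
The choice `γ (α + t) = α / 2` is exactly what turns `ℓ^α r₀^(-α) (L/ℓ)^(γ t)` into `(ℓ/L)^(α/2)`.
-/

open MeasureTheory
open scoped ENNReal

lemma Real.rpow_logb_comm {b x y : ℝ} (hx : 0 < x) (hy : 0 < y) :
    x ^ Real.logb b y = y ^ Real.logb b x := by
  rw [Real.rpow_def_of_pos hx, Real.rpow_def_of_pos hy, Real.logb, Real.logb]
  ring_nf

lemma le_two_pow_ceil_logb {s : ℝ} (hs : 0 < s) : s ≤ 2 ^ ⌈Real.logb 2 s⌉₊ := by
  calc s = 2 ^ Real.logb 2 s := (Real.rpow_logb two_pos (by norm_num) hs).symm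
    _ ≤ 2 ^ (⌈Real.logb 2 s⌉₊ : ℝ) := by gcongr <;> [norm_num; exact Nat.le_ceil _]
    _ = 2 ^ ⌈Real.logb 2 s⌉₊ := Real.rpow_natCast _ _

lemma pow_ceil_logb_le_mul_rpow_logb {C s : ℝ} (hC : 1 ≤ C) (hs : 1 ≤ s) :
    C ^ ⌈Real.logb 2 s⌉₊ ≤ C * s ^ Real.logb 2 C := by
  have hlog : 0 ≤ Real.logb 2 s := Real.logb_nonneg one_lt_two hs
  calc C ^ ⌈Real.logb 2 s⌉₊ = C ^ (⌈Real.logb 2 s⌉₊ : ℝ) := (Real.rpow_natCast _ _).symm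
    _ ≤ C ^ (1 + Real.logb 2 s) := by
        gcongr
        linarith [Nat.ceil_lt_add_one hlog]
    _ = C * s ^ Real.logb 2 C := by
        rw [Real.rpow_add (by linarith), Real.rpow_one,
          Real.rpow_logb_comm (by linarith) (by linarith)]

lemma div_rpow_mul_mul_rpow_mul_rpow_one_sub {c γ ℓ L : ℝ} (hℓ : 0 < ℓ) (hL : 0 < L) :
    (L / ℓ) ^ γ * (c * ℓ ^ γ * L ^ (1 - γ)) = c * L := by
  rw [Real.div_rpow hL.le hℓ.le]
  calc L ^ γ / ℓ ^ γ * (c * ℓ ^ γ * L ^ (1 - γ))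
      = c * (L ^ γ * L ^ (1 - γ)) * (ℓ ^ γ / ℓ ^ γ) := by ring
    _ = c * L := by rw [← Real.rpow_add hL, div_self (by positivity)]; simp

lemma rpow_mul_rpow_neg_mul_rpow_eq {α γ t c ℓ L M : ℝ} (hc : 0 < c) (hℓ : 0 < ℓ)
    (hL : 0 < L) (hM : 0 ≤ M) (hγ : γ * (α + t) = α / 2) :
    ℓ ^ α * (c * ℓ ^ γ * L ^ (1 - γ)) ^ (-α) * (M * (L / ℓ) ^ γ) ^ t
      = M ^ t * c ^ (-α) * (ℓ / L) ^ (α / 2) := by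
  obtain ⟨u, hu, rfl⟩ : ∃ u, 0 < u ∧ ℓ = L * u := ⟨ℓ / L, by positivity, by field_simp⟩
  have hr₀ : c * (L * u) ^ γ * L ^ (1 - γ) = c * L * u ^ γ := by
    rw [Real.mul_rpow hL.le hu.le, mul_comm (L ^ γ), mul_assoc, mul_assoc, ← Real.rpow_add hL]
    simp only [add_sub_cancel, Real.rpow_one]
    ring
  have hs : L / (L * u) = u ^ (-1 : ℝ) := by rw [Real.rpow_neg_one]; field_simp
  rw [hr₀, hs, show L * u / L = u by field_simp, Real.mul_rpow hL.le hu.le,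
    Real.mul_rpow (by positivity) (by positivity), Real.mul_rpow hc.le hL.le,
    Real.mul_rpow hM (by positivity), ← Real.rpow_mul hu.le, ← Real.rpow_mul hu.le,
    ← Real.rpow_mul hu.le, Real.rpow_neg hL.le]
  have hexp : α / 2 = α + γ * -α + -1 * γ * t := by linear_combination hγ
  rw [hexp, Real.rpow_add hu, Real.rpow_add hu]
  field_simp

section Doubling

variable {f : ℝ → ℝ} {C : ℝ}

lemma le_pow_mul_of_doubling (hC : 0 ≤ C) (hdbl : ∀ r, 0 < r → f (2 * r) ≤ C * f r) (n : ℕ)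
    {r : ℝ} (hr : 0 < r) : f (2 ^ n * r) ≤ C ^ n * f r := by
  induction n generalizing r with
  | zero => simp
  | succ n ih =>
    calc f (2 ^ (n + 1) * r) = f (2 ^ n * (2 * r)) := by ring_nf
      _ ≤ C ^ n * f (2 * r) := ih (by positivity)
      _ ≤ C ^ n * (C * f r) := by gcongr; exact hdbl r hr
      _ = C ^ (n + 1) * f r := by ring

lemma le_mul_rpow_logb_mul_of_doubling (hC : 1 ≤ C) (hmono : MonotoneOn f (Set.Ioi 0))
    (hdbl : ∀ r, 0 < r → f (2 * r) ≤ C * f r) {r R s : ℝ} (hr : 0 < r) (hR : 0 < R)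
    (hfr : 0 ≤ f r) (hs : 1 ≤ s) (hRs : R ≤ s * r) :
    f R ≤ C * s ^ Real.logb 2 C * f r := by
  set n := ⌈Real.logb 2 s⌉₊
  have hRn : R ≤ 2 ^ n * r := hRs.trans (by gcongr; exact le_two_pow_ceil_logb (by linarith))
  calc f R ≤ f (2 ^ n * r) := hmono hR (by simp only [Set.mem_Ioi]; positivity) hRn
    _ ≤ C ^ n * f r := le_pow_mul_of_doubling (by linarith) hdbl n hr
    _ ≤ C * s ^ Real.logb 2 C * f r := by gcongr; exact pow_ceil_logb_le_mul_rpow_logb hC hs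

lemma le_mul_rpow_logb_mul_of_doubling_of_geomMean (hC : 1 ≤ C)
    (hmono : MonotoneOn f (Set.Ioi 0)) (hdbl : ∀ r, 0 < r → f (2 * r) ≤ C * f r)
    {c C_Q γ ℓ L : ℝ} (hc : 0 < c) (hC_Q : 0 < C_Q) (hγ : 0 ≤ γ) (hℓ : 0 < ℓ) (hℓL : ℓ ≤ L)
    (hf : 0 ≤ f (c * ℓ ^ γ * L ^ (1 - γ))) :
    f (C_Q * L) ≤ C * (max (C_Q / c) 1 * (L / ℓ) ^ γ) ^ Real.logb 2 C
      * f (c * ℓ ^ γ * L ^ (1 - γ)) := by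
  have hL : 0 < L := hℓ.trans_le hℓL
  refine le_mul_rpow_logb_mul_of_doubling hC hmono hdbl (by positivity) (by positivity) hf
    (one_le_mul_of_one_le_of_one_le (le_max_right _ _)
      (Real.one_le_rpow ((one_le_div hℓ).2 hℓL) hγ)) ?_
  rw [mul_assoc, div_rpow_mul_mul_rpow_mul_rpow_one_sub hℓ hL, ← mul_assoc]
  gcongr
  exact (div_le_iff₀ hc).1 (le_max_left _ _)

lemma mul_rpow_neg_mul_inv_mul_le_of_doubling (hC : 1 ≤ C) (hmono : MonotoneOn f (Set.Ioi 0))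
    (hdbl : ∀ r, 0 < r → f (2 * r) ≤ C * f r) {C₀ V α γ c C_Q ℓ L : ℝ} (hC₀ : 0 ≤ C₀)
    (hc : 0 < c) (hC_Q : 0 < C_Q) (hγ : 0 ≤ γ) (hγα : γ * (α + Real.logb 2 C) = α / 2)
    (hℓ : 0 < ℓ) (hℓL : ℓ ≤ L) (hf : 0 < f (c * ℓ ^ γ * L ^ (1 - γ)))
    (hV : V ≤ C₀ * f (C_Q * L)) :
    ℓ ^ α * (c * ℓ ^ γ * L ^ (1 - γ)) ^ (-α) * (f (c * ℓ ^ γ * L ^ (1 - γ)))⁻¹ * V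
      ≤ C₀ * C * max (C_Q / c) 1 ^ Real.logb 2 C * c ^ (-α) * (ℓ / L) ^ (α / 2) := by
  have hL : 0 < L := hℓ.trans_le hℓL
  have hr₀ : 0 < c * ℓ ^ γ * L ^ (1 - γ) := by positivity
  set r₀ := c * ℓ ^ γ * L ^ (1 - γ)
  set s := max (C_Q / c) 1 * (L / ℓ) ^ γ
  calc ℓ ^ α * r₀ ^ (-α) * (f r₀)⁻¹ * V
      ≤ ℓ ^ α * r₀ ^ (-α) * (f r₀)⁻¹ * (C₀ * (C * s ^ Real.logb 2 C * f r₀)) := by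
        refine mul_le_mul_of_nonneg_left (hV.trans ?_) (by positivity)
        gcongr
        exact le_mul_rpow_logb_mul_of_doubling_of_geomMean hC hmono hdbl hc hC_Q hγ hℓ hℓL hf.le
    _ = C₀ * C * (ℓ ^ α * r₀ ^ (-α) * s ^ Real.logb 2 C) * ((f r₀)⁻¹ * f r₀) := by ring
    _ = C₀ * C * max (C_Q / c) 1 ^ Real.logb 2 C * c ^ (-α) * (ℓ / L) ^ (α / 2) := by
        rw [rpow_mul_rpow_neg_mul_rpow_eq hc hℓ hL (by positivity) hγα,
          inv_mul_cancel₀ hf.ne']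
        ring

end Doubling

lemma mul_rpow_neg_mul_inv_le_of_le {g : ℝ → ℝ} {a α r R : ℝ} (hg : MonotoneOn g (Set.Ioi 0))
    (hgr : 0 < g r) (ha : 0 ≤ a) (hα : 0 ≤ α) (hr : 0 < r) (hrR : r ≤ R) :
    a * R ^ (-α) * (g R)⁻¹ ≤ a * r ^ (-α) * (g r)⁻¹ := by
  have hgR : g r ≤ g R := hg hr (hr.trans_le hrR) hrR
  have : 0 < g R := hgr.trans_le hgR
  gcongr a * ?_ * ?_
  · exact Real.rpow_le_rpow_of_nonpos hr hrR (neg_nonpos.2 hα)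
  · exact inv_anti₀ hgr hgR

lemma ENNReal.rpow_half_le_mul_rpow_neg_half {a b : ℝ≥0∞} (hba : b ≤ a) (ha : a ≠ ⊤) :
    a ^ (1 / 2 : ℝ) ≤ a * b ^ (-(1 / 2) : ℝ) := by
  rcases eq_or_ne a 0 with rfl | ha0
  · simp
  calc a ^ (1 / 2 : ℝ) = a ^ (1 + -(1 / 2) : ℝ) := by norm_num
    _ = a * a ^ (-(1 / 2) : ℝ) := by rw [ENNReal.rpow_add _ _ ha0 ha, ENNReal.rpow_one]
    _ ≤ a * b ^ (-(1 / 2) : ℝ) := by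
        rw [ENNReal.rpow_neg, ENNReal.rpow_neg]
        gcongr

section Integral

variable {X E : Type*} [MeasurableSpace X] [NormedAddCommGroup E] {μ : Measure X} {f : X → E}

lemma setLIntegral_enorm_le_eLpNorm_two_mul (hf : AEStronglyMeasurable f μ) (s : Set X) :
    ∫⁻ x in s, ‖f x‖ₑ ∂μ ≤ eLpNorm f 2 μ * μ s ^ (1 / 2 : ℝ) :=
  calc ∫⁻ x in s, ‖f x‖ₑ ∂μ = eLpNorm f 1 (μ.restrict s) := eLpNorm_one_eq_lintegral_enorm.symm
    _ ≤ eLpNorm f 2 (μ.restrict s) * μ s ^ (1 / 2 : ℝ) := by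
        convert eLpNorm_le_eLpNorm_mul_rpow_measure_univ one_le_two hf.restrict using 3
        · rw [Measure.restrict_apply_univ]
        · norm_num
    _ ≤ eLpNorm f 2 μ * μ s ^ (1 / 2 : ℝ) := by
        gcongr ?_ * _
        exact eLpNorm_restrict_le f 2 μ s

lemma setLIntegral_ofReal_mul_norm_le {s : Set X} (hs : MeasurableSet s)
    (hf : AEStronglyMeasurable f μ) {g : X → ℝ} {K : ℝ} (hg : ∀ x ∈ s, g x ≤ K) :
    ∫⁻ x in s, ENNReal.ofReal (g x * ‖f x‖) ∂μ
      ≤ ENNReal.ofReal K * (eLpNorm f 2 μ * μ s ^ (1 / 2 : ℝ)) :=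
  calc ∫⁻ x in s, ENNReal.ofReal (g x * ‖f x‖) ∂μ
      ≤ ∫⁻ x in s, ENNReal.ofReal K * ‖f x‖ₑ ∂μ := by
        refine setLIntegral_mono_ae' hs (Filter.Eventually.of_forall fun x hx => ?_)
        rw [← ofReal_norm, ← ENNReal.ofReal_mul' (norm_nonneg _)]
        gcongr
        exact hg x hx
    _ ≤ _ := by
        rw [lintegral_const_mul' _ _ ENNReal.ofReal_ne_top]
        gcongr
        exact setLIntegral_enorm_le_eLpNorm_two_mul hf s

lemma setLIntegral_ofReal_mul_norm_le_mul_rpow_neg_half {s B S : Set X} (hs : MeasurableSet s)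
    (hf : AEStronglyMeasurable f μ) (hf_norm : eLpNorm f 2 μ ≤ 1) {g : X → ℝ} {K V : ℝ}
    (hg : ∀ x ∈ s, g x ≤ K) (hK : 0 ≤ K) (hsB : s ⊆ B) (hSB : μ S ≤ μ B)
    (hBV : μ B ≤ ENNReal.ofReal V) :
    ∫⁻ x in s, ENNReal.ofReal (g x * ‖f x‖) ∂μ ≤ ENNReal.ofReal (K * V) * μ S ^ (-(1 / 2) : ℝ) :=
  calc ∫⁻ x in s, ENNReal.ofReal (g x * ‖f x‖) ∂μ
      ≤ ENNReal.ofReal K * (1 * μ B ^ (1 / 2 : ℝ)) := by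
        refine (setLIntegral_ofReal_mul_norm_le hs hf hg).trans ?_
        gcongr
    _ ≤ ENNReal.ofReal K * (μ B * μ S ^ (-(1 / 2) : ℝ)) := by
        rw [one_mul]
        gcongr
        exact ENNReal.rpow_half_le_mul_rpow_neg_half hSB
          (ne_top_of_le_ne_top ENNReal.ofReal_ne_top hBV)
    _ ≤ ENNReal.ofReal (K * V) * μ S ^ (-(1 / 2) : ℝ) := by
        rw [ENNReal.ofReal_mul hK, mul_assoc]
        gcongr

end Integral

/-- the integral estimate (eq5:SepIn_b) used in the second
Separated/Nested lemma of the paper. -/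
theorem sibling_child_integral_estimate
    (Clam C₀ C_Q α c : ℝ)
    (hClam : 1 ≤ Clam) (hC₀ : 1 ≤ C₀) (hC_Q : 1 ≤ C_Q) (hα : 0 < α) (hc : 0 < c) :
    ∃ C' : ℝ, 0 < C' ∧
      ∀ (X : Type) [MeasurableSpace X]
        (ρ : X → X → ℝ) (A₀ : ℝ) (μ : Measure X) (lam : X → ℝ → ℝ)
        (ℓ L : ℝ) (w z' : X) (Q' S : Set X) (h : X → ℂ),
        1 ≤ A₀ →
        (∀ a b, 0 ≤ ρ a b) → (∀ a b, ρ a b = 0 ↔ a = b) →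
        (∀ a b, ρ a b = ρ b a) → (∀ a b e, ρ a e ≤ A₀ * (ρ a b + ρ b e)) →
        (∀ a r, 0 < r → 0 < lam a r) →
        (∀ a r s, 0 < r → r ≤ s → lam a r ≤ lam a s) →
        (∀ a r, 0 < r → lam a (2 * r) ≤ Clam * lam a r) →
        (∀ a r, 0 < r → μ {b | ρ a b < r} ≤ ENNReal.ofReal (lam a r)) →
        (∀ a b r, ρ a b ≤ r → lam a r ≤ C₀ * lam b r) →
        (Measurable fun x => ρ x w) →
        (Measurable fun x => lam w (ρ x w)) →
        MeasurableSet Q' →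
        0 < ℓ → ℓ ≤ L →
        ρ z' w ≤ C_Q * L →
        Q' ⊆ {b | ρ z' b < C_Q * L} →
        μ S ≤ μ {b | ρ z' b < C_Q * L} →
        (∀ x ∈ Q',
          c * ℓ ^ (α / (2 * (α + Real.logb 2 Clam)))
              * L ^ (1 - α / (2 * (α + Real.logb 2 Clam))) ≤ ρ x w) →
        MemLp h 2 μ → eLpNorm h 2 μ ≤ 1 →
        (∫⁻ x in Q', ENNReal.ofReal (ℓ ^ α * ρ x w ^ (-α) * (lam w (ρ x w))⁻¹ * ‖h x‖) ∂μ)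
          ≤ ENNReal.ofReal (C' * (ℓ / L) ^ (α / 2)) * μ S ^ (-(1 / 2) : ℝ) := by
  set t := Real.logb 2 Clam
  set γ := α / (2 * (α + t))
  set M := max (C_Q / c) 1
  have ht : 0 ≤ t := Real.logb_nonneg one_lt_two hClam
  have hγ : 0 < γ := div_pos hα (by positivity)
  have hγt : γ * (α + t) = α / 2 := by simp only [γ]; field_simp
  refine ⟨C₀ * Clam * M ^ t * c ^ (-α), by positivity, ?_⟩
  intro X _ ρ A₀ μ lam ℓ L w z' Q' S h _ _ _ _ _ hlam_pos hlam_mono hlam_dbl hμ_lam hlam_symm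
    _ _ hQ' hℓ hℓL hz'w hQ'B hμS hρ_good hh hh_norm
  have hL : 0 < L := hℓ.trans_le hℓL
  set r₀ := c * ℓ ^ γ * L ^ (1 - γ)
  have hr₀ : 0 < r₀ := by positivity
  have hlam_r₀ : 0 < lam w r₀ := hlam_pos w r₀ hr₀
  have hmono : MonotoneOn (lam w) (Set.Ioi 0) := fun r hr s _ hrs => hlam_mono w r s hr hrs
  refine (setLIntegral_ofReal_mul_norm_le_mul_rpow_neg_half hQ' hh.1 hh_norm
    (fun x hx => mul_rpow_neg_mul_inv_le_of_le hmono hlam_r₀ (by positivity) hα.le hr₀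
      (hρ_good x hx)) (by positivity) hQ'B hμS (hμ_lam z' _ (by positivity))).trans ?_
  gcongr ENNReal.ofReal ?_ * _
  exact mul_rpow_neg_mul_inv_mul_le_of_doubling hClam hmono (hlam_dbl w) (by positivity) hc
    (by positivity) hγ.le hγt hℓ hℓL hlam_r₀ (hlam_symm z' w _ hz'w)
end
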